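/- arXiv:2312.11203 — 11 statements merged into one kernel-verified Lean document; each statement's English description precedes it below -/
import Mathlib

section
/- Let A be a C*-algebra, let p and q be projections in A (self-adjoint idempotents), and suppose there is an element v ∈ A such that ‖v p v* − q‖ < 1. Then q is Murray–von Neumann equivalent to a subprojection of p; that is, there exists w ∈ A with w w* = q and w* w ≤ p. -/
/-!
Put `s = q v p`. Then `s s* - q = q (v p v* - q) q`, so `‖s s* - q‖ < 1`. In the unitization,
`T = s s* + (1 - q)` is within distance `1` of `1`, hence positive and invertible; it commutes
with `q` and `T q = s s*`. So `w = T^(-1/2) s` satisfies `w w* = T^(-1/2) T T^(-1/2) q = q`,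
lies in `A` because `s` does, and `w p = w`. Thus `w* w` is a projection with `(w* w) p = w* w`.
-/

open Unitization

theorem Unitization.mul_inr {R A : Type*} [CommSemiring R] [NonUnitalSemiring A] [Module R A]
    (x : Unitization R A) (a : A) :
    x * (a : Unitization R A) = ((x.fst • a + x.snd * a : A) : Unitization R A) := by
  ext <;> simp

theorem IsStarProjection.norm_mul_mul_le {E : Type*} [NonUnitalNormedRing E] [StarRing E]
    [CStarRing E] {q : E} (hq : IsStarProjection q) (a : E) : ‖q * a * q‖ ≤ ‖a‖ := by
  have hq1 := hq.norm_le
  calc ‖q * a * q‖ ≤ ‖q‖ * ‖a‖ * ‖q‖ := norm_mul₃_le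
    _ ≤ 1 * ‖a‖ * 1 := by gcongr
    _ = ‖a‖ := by ring

theorem IsStarProjection.exists_mul_mul_star_eq_of_norm_sub_lt_one {B : Type*} [CStarAlgebra B]
    {q s : B} (hq : IsStarProjection q) (hqs : q * s = s)
    (hs : ‖s * star s - q‖ < 1) : ∃ d : B, d * s * star (d * s) = q := by
  let _ := CStarAlgebra.spectralOrder B
  have := CStarAlgebra.spectralOrderedRing B
  set T := s * star s + (1 - q)
  have hsq : star s * q = star s := by
    simpa [star_mul, hq.isSelfAdjoint.star_eq] using congrArg star hqs
  have hTq : T * q = s * star s := by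
    simp only [T, add_mul, sub_mul, one_mul, hq.isIdempotentElem.eq, mul_assoc, hsq]; abel
  have hqT : Commute q T := by
    show q * T = T * q
    rw [hTq]
    simp only [T, mul_add, mul_sub, mul_one, hq.isIdempotentElem.eq, ← mul_assoc, hqs]; abel
  have hT : IsStrictlyPositive T := by
    refine IsUnit.isStrictlyPositive ?_ (add_nonneg (mul_star_self_nonneg s) hq.one_sub_nonneg)
    have h : ‖1 - T‖ < 1 := by
      rwa [norm_sub_rev, show T - 1 = s * star s - q by simp only [T]; abel]
    simpa using (Units.oneSub (1 - T) h).isUnit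
  set d := T ^ (-(1 / 2) : ℝ)
  have hd_comm : Commute d q := hqT.symm.cfc_nnreal _
  have hdTd : d * T * d = 1 := by
    rw [← CFC.rpow_one T, ← CFC.rpow_add hT.isUnit, ← CFC.rpow_add hT.isUnit]
    norm_num [CFC.rpow_zero T]
  refine ⟨d, ?_⟩
  rw [star_mul, (CFC.rpow_nonneg (a := T)).isSelfAdjoint.star_eq]
  calc d * s * (star s * d) = d * (T * q) * d := by rw [hTq]; simp only [mul_assoc]
    _ = d * T * d * q := by
      rw [← mul_assoc d T q, mul_assoc (d * T) q d, ← hd_comm.eq, ← mul_assoc]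
    _ = q := by rw [hdTd, one_mul]

/-- If `A` is a C*-algebra, `p` and `q` are projections in `A`, and
`v ∈ A` satisfies `‖v p v* − q‖ < 1`, then `q` is Murray–von Neumann equivalent to a
subprojection of `p`: there is `w` with `w w* = q` and `w* w ≤ p`. -/
theorem stmt_0 {A : Type*} [NonUnitalCStarAlgebra A] [PartialOrder A] [StarOrderedRing A]
    (p q : A) (hp_sa : star p = p) (hp_idem : p * p = p)
    (hq_sa : star q = q) (hq_idem : q * q = q)
    (v : A) (hv : ‖v * p * star v - q‖ < 1) :
    ∃ w : A, w * star w = q ∧ star w * w ≤ p := by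
  have hp : IsStarProjection p := ⟨hp_idem, hp_sa⟩
  have hq : IsStarProjection q := ⟨hq_idem, hq_sa⟩
  set s := q * v * p
  have hqs : q * s = s := by simp only [s, ← mul_assoc, hq_idem]
  have hsp : s * p = s := by simp only [s, mul_assoc, hp_idem]
  have hs : ‖s * star s - q‖ < 1 := by
    have h : s * star s - q = q * (v * p * star v - q) * q := by
      simp only [s, star_mul, hp_sa, hq_sa, mul_sub, sub_mul, mul_assoc, hq_idem]
      rw [← mul_assoc p p, hp_idem]
    exact h ▸ (hq.norm_mul_mul_le _).trans_lt hv
  obtain ⟨d, hd⟩ := (hq.inr (R := ℂ)).exists_mul_mul_star_eq_of_norm_sub_lt_one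
    (s := (s : Unitization ℂ A)) (by rw [← inr_mul, hqs])
    (by rwa [← inr_star, ← inr_mul, ← inr_sub, norm_inr])
  set w := d.fst • s + d.snd * s
  have hw : w * star w = q := inr_injective (R := ℂ) <| by
    rw [inr_mul, inr_star, ← mul_inr, hd]
  have hwp : w * p = w := by simp only [w, add_mul, smul_mul_assoc, mul_assoc, hsp]
  have he : IsStarProjection (star w * w) :=
    ⟨isIdempotentElem_star_mul_self_iff_isIdempotentElem_self_mul_star.mpr
      (hw ▸ hq.isIdempotentElem), .star_mul_self w⟩
  exact ⟨w, hw, he.le_of_mul_eq_left hp (by rw [mul_assoc, hwp])⟩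
end

section
/- In the setting of CTXA: for each n ≥ 0 define δ_{n+1} : ℤ × ℤ → ℤ × ℤ by δ_{n+1}(m_1, m_2) = ((l(n+1) − c(n+1)) m_1 + c(n+1) m_2, c(n+1) m_1 + (l(n+1) − c(n+1)) m_2). Then γ_{n+1} ∘ δ_{n+1} = γ_n for every n ≥ 0, and each map γ_n is injective. -/
/-!
Up to scaling, `γ_n` records the coordinates of `(m₁, m₂)` in the basis `(1, 1)`, `(1, -1)`.
These are eigenvectors of the symmetric matrix of `δ_{n+1}`, with eigenvalues `l(n+1)` and
`l(n+1) - 2c(n+1)`, which are exactly the factors by which `r` and `r'` grow from `n` to `n + 1`.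
-/

section SumDiff

variable {K : Type*} [Field K]

def halfSumDiff (a b : K) (M : ℤ × ℤ) : K × K :=
  (((M.1 : K) + M.2) / (2 * a), ((M.1 : K) - M.2) / (2 * b))

def symmetricMap (p q : ℤ) (M : ℤ × ℤ) : ℤ × ℤ :=
  (p * M.1 + q * M.2, q * M.1 + p * M.2)

theorem symmetricMap_fst_add_snd (p q : ℤ) (M : ℤ × ℤ) :
    ((symmetricMap p q M).1 + (symmetricMap p q M).2 : K) = (p + q) * (M.1 + M.2) := by
  simp only [symmetricMap]; push_cast; ring

theorem symmetricMap_fst_sub_snd (p q : ℤ) (M : ℤ × ℤ) :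
    ((symmetricMap p q M).1 - (symmetricMap p q M).2 : K) = (p - q) * (M.1 - M.2) := by
  simp only [symmetricMap]; push_cast; ring

theorem halfSumDiff_comp_symmetricMap {a b a' b' : K} {p q : ℤ}
    (hsum : (p + q : K) ≠ 0) (hdiff : (p - q : K) ≠ 0)
    (ha' : a' = a * (p + q)) (hb' : b' = b * (p - q)) :
    halfSumDiff a' b' ∘ symmetricMap p q = halfSumDiff a b := by
  funext M
  simp only [Function.comp_apply, halfSumDiff, symmetricMap_fst_add_snd,
    symmetricMap_fst_sub_snd, ha', hb']
  rw [← mul_assoc, ← mul_assoc, mul_comm (2 * a), mul_comm (2 * b), mul_div_mul_left _ _ hsum,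
    mul_div_mul_left _ _ hdiff]

theorem halfSumDiff_injective [CharZero K] {a b : K} (ha : a ≠ 0) (hb : b ≠ 0) :
    Function.Injective (halfSumDiff a b) := by
  intro M N h
  obtain ⟨h_sum, h_diff⟩ := Prod.ext_iff.mp h
  simp only [halfSumDiff] at h_sum h_diff
  rw [div_left_inj' (mul_ne_zero two_ne_zero ha)] at h_sum
  rw [div_left_inj' (mul_ne_zero two_ne_zero hb)] at h_diff
  have h₁ : (M.1 : K) = N.1 := by linear_combination (h_sum + h_diff) / 2
  have h₂ : (M.2 : K) = N.2 := by linear_combination (h_sum - h_diff) / 2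
  exact Prod.ext (Int.cast_injective h₁) (Int.cast_injective h₂)

end SumDiff

theorem stmt_4_general (l c : ℕ → ℕ)
    (hl : ∀ n, 1 ≤ n → 2 * c n + 1 ≤ l n)
    (r r' : ℕ → ℕ)
    (hr : ∀ n, r n = ∏ k ∈ Finset.Icc 1 n, l k)
    (hr' : ∀ n, r' n = ∏ k ∈ Finset.Icc 1 n, (l k - 2 * c k))
    (γ : ℕ → ℤ × ℤ → ℚ × ℚ)
    (hγ : ∀ n M, γ n M = (((M.1 : ℚ) + (M.2 : ℚ)) / (2 * (r n : ℚ)),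
                          ((M.1 : ℚ) - (M.2 : ℚ)) / (2 * (r' n : ℚ))))
    (δ : ℕ → ℤ × ℤ → ℤ × ℤ)
    (hδ : ∀ n M, δ n M = (((l n : ℤ) - (c n : ℤ)) * M.1 + (c n : ℤ) * M.2,
                          (c n : ℤ) * M.1 + ((l n : ℤ) - (c n : ℤ)) * M.2)) :
    ∀ n, (γ (n + 1)) ∘ (δ (n + 1)) = γ n ∧ Function.Injective (γ n) := by
  have hγ_eq (n : ℕ) : γ n = halfSumDiff (r n : ℚ) (r' n) := funext (hγ n)
  have hδ_eq (n : ℕ) : δ n = symmetricMap (l n - c n) (c n) := funext (hδ n)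
  have hr_pos (n : ℕ) : 0 < r n :=
    hr n ▸ Finset.prod_pos fun k hk => by have := hl k (Finset.mem_Icc.mp hk).1; omega
  have hr'_pos (n : ℕ) : 0 < r' n :=
    hr' n ▸ Finset.prod_pos fun k hk => by have := hl k (Finset.mem_Icc.mp hk).1; omega
  intro n
  have hln : 2 * c (n + 1) + 1 ≤ l (n + 1) := hl (n + 1) n.succ_pos
  have hr_succ : r (n + 1) = r n * l (n + 1) := by
    rw [hr, hr, Finset.prod_Icc_succ_top n.succ_pos]
  have hr'_succ : r' (n + 1) = r' n * (l (n + 1) - 2 * c (n + 1)) := by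
    rw [hr', hr', Finset.prod_Icc_succ_top n.succ_pos]
  refine ⟨?_, ?_⟩
  · rw [hγ_eq, hγ_eq, hδ_eq]
    apply halfSumDiff_comp_symmetricMap
    · push_cast; rw [sub_add_cancel]; exact_mod_cast (by omega : l (n + 1) ≠ 0)
    · push_cast; rw [sub_sub, ← two_mul]
      exact sub_ne_zero.mpr (by exact_mod_cast (by omega : 2 * c (n + 1) ≠ l (n + 1)).symm)
    · rw [hr_succ]; push_cast; ring
    · rw [hr'_succ, Nat.cast_mul, Nat.cast_sub (by omega)]; push_cast; ring
  · rw [hγ_eq]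
    exact halfSumDiff_injective (Nat.cast_ne_zero.mpr (hr_pos n).ne')
      (Nat.cast_ne_zero.mpr (hr'_pos n).ne')

/-- setting CTXA: with
`γ_n(m₁, m₂) = ((m₁ + m₂)/(2 r(n)), (m₁ − m₂)/(2 r'(n)))` and
`δ_{n+1}(m₁, m₂) = ((l(n+1) − c(n+1)) m₁ + c(n+1) m₂, c(n+1) m₁ + (l(n+1) − c(n+1)) m₂)`,
one has `γ_{n+1} ∘ δ_{n+1} = γ_n`, and each `γ_n` is injective. -/
theorem stmt_4 (l c : ℕ → ℕ) (hc : ∀ n, 1 ≤ n → 1 ≤ c n)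
    (hl : ∀ n, 1 ≤ n → 2 * c n + 1 ≤ l n)
    (r r' : ℕ → ℕ)
    (hr : ∀ n, r n = ∏ k ∈ Finset.Icc 1 n, l k)
    (hr' : ∀ n, r' n = ∏ k ∈ Finset.Icc 1 n, (l k - 2 * c k))
    (γ : ℕ → ℤ × ℤ → ℚ × ℚ)
    (hγ : ∀ n M, γ n M = (((M.1 : ℚ) + (M.2 : ℚ)) / (2 * (r n : ℚ)),
                          ((M.1 : ℚ) - (M.2 : ℚ)) / (2 * (r' n : ℚ))))
    (δ : ℕ → ℤ × ℤ → ℤ × ℤ)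
    (hδ : ∀ n M, δ n M = (((l n : ℤ) - (c n : ℤ)) * M.1 + (c n : ℤ) * M.2,
                          (c n : ℤ) * M.1 + ((l n : ℤ) - (c n : ℤ)) * M.2)) :
    ∀ n, (γ (n + 1)) ∘ (δ (n + 1)) = γ n ∧ Function.Injective (γ n) :=
  stmt_4_general l c hl r r' hr hr' γ hγ δ hδ
end

section
/- In the setting of CTXA, assume additionally that for every positive integer k there exist n, n' ∈ ℤ_{>0} such that k divides r(n) and k divides r'(n'). Then for every (x, y) ∈ ℚ × ℚ there exist n ≥ 0 and m_1, m_2 ∈ ℤ such that γ_n(m_1, m_2) = (x, y); that is, the union over n of the images of the maps γ_n is all of ℚ × ℚ. -/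
/-!
A rational `x` times a multiple of its denominator is an integer. Choosing `N` so large that
`x.den ∣ r N` and `y.den ∣ r' N` (the products `r`, `r'` grow in the divisibility order), the
integers `a = x r(N)` and `b = y r'(N)` give `γ_N(a + b, a - b) = (x, y)`.
-/

open Finset

theorem prod_Icc_one_dvd_prod_Icc_one {M : Type*} [CommMonoid M] (f : ℕ → M) {m n : ℕ}
    (hmn : m ≤ n) : ∏ k ∈ Icc 1 m, f k ∣ ∏ k ∈ Icc 1 n, f k :=
  prod_dvd_prod_of_subset _ _ f (Icc_subset_Icc_right hmn)

theorem Rat.exists_int_eq_mul_of_den_dvd {x : ℚ} {d : ℕ} (h : x.den ∣ d) :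
    ∃ a : ℤ, (a : ℚ) = x * d := by
  obtain ⟨t, rfl⟩ := h
  refine ⟨x.num * t, ?_⟩
  push_cast
  rw [← Rat.mul_den_eq_num]
  ring

theorem exists_add_div_eq_and_sub_div_eq {R R' : ℚ} (hR : R ≠ 0) (hR' : R' ≠ 0) {x y : ℚ}
    (hx : ∃ a : ℤ, (a : ℚ) = x * R) (hy : ∃ b : ℤ, (b : ℚ) = y * R') :
    ∃ m₁ m₂ : ℤ, ((m₁ : ℚ) + m₂) / (2 * R) = x ∧ ((m₁ : ℚ) - m₂) / (2 * R') = y := by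
  obtain ⟨a, ha⟩ := hx
  obtain ⟨b, hb⟩ := hy
  refine ⟨a + b, a - b, ?_, ?_⟩ <;> push_cast <;> field_simp <;> linarith

theorem stmt_5_general (l c : ℕ → ℕ)
    (hl : ∀ n, 1 ≤ n → 2 * c n + 1 ≤ l n)
    (r r' : ℕ → ℕ)
    (hr : ∀ n, r n = ∏ k ∈ Finset.Icc 1 n, l k)
    (hr' : ∀ n, r' n = ∏ k ∈ Finset.Icc 1 n, (l k - 2 * c k))
    (γ : ℕ → ℤ × ℤ → ℚ × ℚ)
    (hγ : ∀ n M, γ n M = (((M.1 : ℚ) + (M.2 : ℚ)) / (2 * (r n : ℚ)),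
                          ((M.1 : ℚ) - (M.2 : ℚ)) / (2 * (r' n : ℚ))))
    (hdiv : ∀ k : ℕ, 0 < k → ∃ n n' : ℕ, 0 < n ∧ 0 < n' ∧ k ∣ r n ∧ k ∣ r' n') :
    ∀ x y : ℚ, ∃ (n : ℕ) (m₁ m₂ : ℤ), γ n (m₁, m₂) = (x, y) := by
  intro x y
  obtain ⟨n, -, -, -, hxn, -⟩ := hdiv x.den x.den_pos
  obtain ⟨-, n', -, -, -, hyn'⟩ := hdiv y.den y.den_pos
  set N := max n n'
  have hxN : x.den ∣ r N := hxn.trans <| by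
    rw [hr, hr]; exact prod_Icc_one_dvd_prod_Icc_one l (le_max_left n n')
  have hyN : y.den ∣ r' N := hyn'.trans <| by
    rw [hr', hr']; exact prod_Icc_one_dvd_prod_Icc_one _ (le_max_right n n')
  have hrN : (r N : ℚ) ≠ 0 := by
    rw [hr]; exact_mod_cast (prod_pos fun k hk => by have := hl k (mem_Icc.1 hk).1; omega).ne'
  have hr'N : (r' N : ℚ) ≠ 0 := by
    rw [hr']; exact_mod_cast (prod_pos fun k hk => by have := hl k (mem_Icc.1 hk).1; omega).ne'
  obtain ⟨m₁, m₂, h₁, h₂⟩ := exists_add_div_eq_and_sub_div_eq hrN hr'N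
    (Rat.exists_int_eq_mul_of_den_dvd hxN) (Rat.exists_int_eq_mul_of_den_dvd hyN)
  exact ⟨N, m₁, m₂, by rw [hγ, h₁, h₂]⟩

/-- setting CTXA: if every positive integer divides some `r(n)` and some
`r'(n')`, then every element of `ℚ × ℚ` lies in the image of some `γ_n`. -/
theorem stmt_5 (l c : ℕ → ℕ) (hc : ∀ n, 1 ≤ n → 1 ≤ c n)
    (hl : ∀ n, 1 ≤ n → 2 * c n + 1 ≤ l n)
    (r r' : ℕ → ℕ)
    (hr : ∀ n, r n = ∏ k ∈ Finset.Icc 1 n, l k)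
    (hr' : ∀ n, r' n = ∏ k ∈ Finset.Icc 1 n, (l k - 2 * c k))
    (γ : ℕ → ℤ × ℤ → ℚ × ℚ)
    (hγ : ∀ n M, γ n M = (((M.1 : ℚ) + (M.2 : ℚ)) / (2 * (r n : ℚ)),
                          ((M.1 : ℚ) - (M.2 : ℚ)) / (2 * (r' n : ℚ))))
    (hdiv : ∀ k : ℕ, 0 < k → ∃ n n' : ℕ, 0 < n ∧ 0 < n' ∧ k ∣ r n ∧ k ∣ r' n') :
    ∀ x y : ℚ, ∃ (n : ℕ) (m₁ m₂ : ℤ), γ n (m₁, m₂) = (x, y) :=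
  stmt_5_general l c hl r r' hr hr' γ hγ hdiv
end

section
/- In the setting of CTXA: the partial products π_n = ∏_{k=1}^{n} (1 − 2c(k)/l(k)) form a strictly decreasing sequence in (0, 1]; let λ = lim_{n→∞} π_n. If n ≥ 0 and m_1, m_2 are nonnegative integers, then the pair (x, y) = γ_n(m_1, m_2) satisfies: either (x, y) = (0, 0) (which happens exactly when m_1 = m_2 = 0), or x > λ|y|. -/
/-!
Since `π n = r' n / r n`, the second coordinate of `γ n (m₁, m₂)` satisfies
`π n * |y| = |m₁ - m₂| / (2 r n) ≤ (m₁ + m₂) / (2 r n) = x`. Strict decrease of `π` gives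
`λ < π n`, hence `λ |y| < x` as soon as `x > 0`, i.e. unless `m₁ = m₂ = 0`.
-/

open Filter Finset

theorem StrictAnti.lt_of_tendsto {α β : Type*} [TopologicalSpace α] [Preorder α]
    [OrderClosedTopology α] [PartialOrder β] [IsDirectedOrder β] [NoMaxOrder β] {f : β → α} {a : α}
    (hf : StrictAnti f) (ha : Tendsto f atTop (nhds a)) (b : β) : a < f b := by
  obtain ⟨b', hb'⟩ := exists_gt b
  exact (hf.antitone.le_of_tendsto ha b').trans_lt (hf hb')

section PartialProducts

variable {R : Type*} [CommRing R] [LinearOrder R] [IsStrictOrderedRing R] {f : ℕ → R}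

theorem prod_Icc_one_pos (h0 : ∀ k, 1 ≤ k → 0 < f k) (n : ℕ) : 0 < ∏ k ∈ Icc 1 n, f k :=
  prod_pos fun k hk => h0 k (mem_Icc.mp hk).1

theorem prod_Icc_one_le_one (h0 : ∀ k, 1 ≤ k → 0 < f k) (h1 : ∀ k, 1 ≤ k → f k < 1) (n : ℕ) :
    ∏ k ∈ Icc 1 n, f k ≤ 1 :=
  prod_le_one (fun k hk => (h0 k (mem_Icc.mp hk).1).le)
    fun k hk => (h1 k (mem_Icc.mp hk).1).le

theorem strictAnti_prod_Icc_one (h0 : ∀ k, 1 ≤ k → 0 < f k) (h1 : ∀ k, 1 ≤ k → f k < 1) :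
    StrictAnti fun n => ∏ k ∈ Icc 1 n, f k := by
  refine strictAnti_nat_of_succ_lt fun n => ?_
  rw [prod_Icc_succ_top (Nat.le_add_left 1 n)]
  exact mul_lt_of_lt_one_right (prod_Icc_one_pos h0 n) (h1 (n + 1) (Nat.le_add_left 1 n))

end PartialProducts

section Factors

variable {c l : ℕ}

theorem one_sub_two_mul_div_pos (hcl : 2 * c + 1 ≤ l) : (0 : ℝ) < 1 - 2 * c / l := by
  have hl : (2 * c + 1 : ℝ) ≤ l := by exact_mod_cast hcl
  rw [sub_pos, div_lt_one (by linarith)]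
  linarith

theorem one_sub_two_mul_div_lt_one (hc : 1 ≤ c) (hcl : 2 * c + 1 ≤ l) :
    1 - 2 * (c : ℝ) / l < 1 := by
  have : (0 : ℝ) < 2 * c / l := div_pos (by norm_cast; omega) (by norm_cast; omega)
  linarith

theorem one_sub_two_mul_div_eq (hcl : 2 * c + 1 ≤ l) :
    (1 : ℝ) - 2 * c / l = ((l - 2 * c : ℕ) : ℝ) / l := by
  have hl : (l : ℝ) ≠ 0 := Nat.cast_ne_zero.mpr (by omega)
  rw [Nat.cast_sub (by omega)]
  push_cast
  field_simp

end Factors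

theorem mul_abs_lt_of_mul_abs_le {R : Type*} [Ring R] [LinearOrder R] [IsStrictOrderedRing R]
    {x y μ ρ : R} (hx : 0 < x) (hρ : ρ * |y| ≤ x) (hμ : μ < ρ) :
    μ * |y| < x := by
  rcases (abs_nonneg y).eq_or_lt with hy | hy
  · rwa [← hy, mul_zero]
  · exact (mul_lt_mul_of_pos_right hμ hy).trans_le hρ

theorem div_mul_abs_sub_div_le_add_div {R : Type*} [Field R] [LinearOrder R]
    [IsStrictOrderedRing R] {a b s t : R} (ha : 0 ≤ a) (hb : 0 ≤ b) (hs : 0 < s)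
    (ht : 0 < t) : t / s * |(a - b) / (2 * t)| ≤ (a + b) / (2 * s) := by
  have hab : |a - b| ≤ a + b := abs_le.mpr ⟨by linarith, by linarith⟩
  calc t / s * |(a - b) / (2 * t)| = |a - b| / (2 * s) := by
        rw [abs_div, abs_of_pos (by positivity : (0 : R) < 2 * t)]
        field_simp
    _ ≤ (a + b) / (2 * s) := by gcongr

theorem add_div_sub_div_eq_zero_iff {m₁ m₂ : ℤ} (hm₁ : 0 ≤ m₁) (hm₂ : 0 ≤ m₂) {s t : ℚ}
    (hs : 0 < s) :
    (((m₁ : ℚ) + m₂) / (2 * s), ((m₁ : ℚ) - m₂) / (2 * t)) = (0, 0) ↔ m₁ = 0 ∧ m₂ = 0 := by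
  constructor
  · intro h
    have hsum : ((m₁ + m₂ : ℤ) : ℚ) = 0 := by
      push_cast
      simpa [hs.ne'] using congrArg Prod.fst h
    have : m₁ + m₂ = 0 := by exact_mod_cast hsum
    omega
  · rintro ⟨rfl, rfl⟩
    simp

/-- setting CTXA: the partial products `π_N = ∏_{k=1}^N (1 − 2c(k)/l(k))`
form a strictly decreasing sequence in `(0, 1]` with limit `λ`, and for nonnegative
integers `m₁, m₂`, the pair `(x, y) = γ_n(m₁, m₂)` is either `(0,0)` (exactly when
`m₁ = m₂ = 0`) or satisfies `x > λ|y|`. -/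
theorem stmt_6 (l c : ℕ → ℕ) (hc : ∀ n, 1 ≤ n → 1 ≤ c n)
    (hl : ∀ n, 1 ≤ n → 2 * c n + 1 ≤ l n)
    (r r' : ℕ → ℕ)
    (hr : ∀ n, r n = ∏ k ∈ Finset.Icc 1 n, l k)
    (hr' : ∀ n, r' n = ∏ k ∈ Finset.Icc 1 n, (l k - 2 * c k))
    (γ : ℕ → ℤ × ℤ → ℚ × ℚ)
    (hγ : ∀ n M, γ n M = (((M.1 : ℚ) + (M.2 : ℚ)) / (2 * (r n : ℚ)),
                          ((M.1 : ℚ) - (M.2 : ℚ)) / (2 * (r' n : ℚ))))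
    (π : ℕ → ℝ)
    (hπ : ∀ n, π n = ∏ k ∈ Finset.Icc 1 n, (1 - 2 * (c k : ℝ) / (l k : ℝ)))
    (lam : ℝ) (hlam : Tendsto π atTop (nhds lam)) :
    StrictAnti π ∧ (∀ n, π n ∈ Set.Ioc (0 : ℝ) 1) ∧
      ∀ (n : ℕ) (m₁ m₂ : ℤ), 0 ≤ m₁ → 0 ≤ m₂ →
        ((γ n (m₁, m₂) = (0, 0) ↔ m₁ = 0 ∧ m₂ = 0) ∧
          (γ n (m₁, m₂) ≠ (0, 0) →
            ((γ n (m₁, m₂)).1 : ℝ) > lam * |((γ n (m₁, m₂)).2 : ℝ)|)) := by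
  have hfac_pos k (hk : 1 ≤ k) := one_sub_two_mul_div_pos (hl k hk)
  have hfac_lt k (hk : 1 ≤ k) := one_sub_two_mul_div_lt_one (hc k hk) (hl k hk)
  have hπ_anti : StrictAnti π := by
    simpa only [← funext hπ] using strictAnti_prod_Icc_one hfac_pos hfac_lt
  have hr_pos n : 0 < r n := hr n ▸ prod_pos fun k hk => by grind [hl k (mem_Icc.mp hk).1]
  have hr'_pos n : 0 < r' n := hr' n ▸ prod_pos fun k hk => by grind [hl k (mem_Icc.mp hk).1]
  have hπ_eq n : π n = r' n / r n := by
    rw [hπ, hr, hr', Nat.cast_prod, Nat.cast_prod, ← prod_div_distrib]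
    exact prod_congr rfl fun k hk => one_sub_two_mul_div_eq (hl k (mem_Icc.mp hk).1)
  refine ⟨hπ_anti, fun n => ⟨hπ n ▸ prod_Icc_one_pos hfac_pos n,
    hπ n ▸ prod_Icc_one_le_one hfac_pos hfac_lt n⟩, fun n m₁ m₂ hm₁ hm₂ => ?_⟩
  have hzero := add_div_sub_div_eq_zero_iff hm₁ hm₂ (s := r n) (t := r' n)
    (by exact_mod_cast hr_pos n)
  rw [hγ]
  refine ⟨hzero, fun hne => ?_⟩
  have hsum : (0 : ℝ) < m₁ + m₂ := by
    have hm := mt hzero.mpr hne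
    exact_mod_cast (by omega : 0 < m₁ + m₂)
  have hs : (0 : ℝ) < r n := by exact_mod_cast hr_pos n
  have ht : (0 : ℝ) < r' n := by exact_mod_cast hr'_pos n
  push_cast
  refine mul_abs_lt_of_mul_abs_le (by positivity) ?_ (hπ_eq n ▸ hπ_anti.lt_of_tendsto hlam n)
  exact div_mul_abs_sub_div_le_add_div (by exact_mod_cast hm₁) (by exact_mod_cast hm₂) hs ht
end

section
/- In the setting of CTXC: if f : ℚ × ℚ → ℚ × ℚ is an additive bijection with f((1,0)) = (1,0) such that both f and f⁻¹ map the cone C_λ into C_λ, then f is either the identity map or the map σ(x, y) = (x, −y). In particular, (ℚ × ℚ, C_λ, (1,0)) has exactly one nontrivial automorphism as a scaled ordered group. -/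
/-!
An additive map of `ℚ × ℚ` fixing `(1, 0)` is the shear `(x, y) ↦ (x + b y, d y)` with
`(b, d) = f (0, 1)`. Testing cone preservation on the rays `(q, ±1)`, and density of `ℚ` in `ℝ`,
gives `λ|d| + |b| ≤ λ`; testing the reverse inclusion on `(q, ±d)` gives `λ + |b| ≤ λ|d|`.
Hence `b = 0` and `|d| = 1`.
-/

def ratCone (lam : ℝ) : Set (ℚ × ℚ) :=
  {z : ℚ × ℚ | z = (0, 0) ∨ (z.1 : ℝ) > lam * |(z.2 : ℝ)|}

def shear (b d : ℚ) (z : ℚ × ℚ) : ℚ × ℚ :=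
  (z.1 + b * z.2, d * z.2)

lemma mk_mem_ratCone {lam : ℝ} {x y : ℚ} (h : lam * |(y : ℝ)| < x) : (x, y) ∈ ratCone lam :=
  Or.inr h

lemma lt_of_mk_mem_ratCone {lam : ℝ} {x y : ℚ} (h : (x, y) ∈ ratCone lam) (hy : y ≠ 0) :
    lam * |(y : ℝ)| < x := by
  rcases h with h | h
  · exact absurd (Prod.ext_iff.mp h).2 hy
  · exact h

lemma eq_shear_of_map_add {f : ℚ × ℚ → ℚ × ℚ} (hadd : ∀ a b, f (a + b) = f a + f b)
    (hunit : f (1, 0) = (1, 0)) : f = shear (f (0, 1)).1 (f (0, 1)).2 := by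
  funext z
  let φ : ℚ × ℚ →+ ℚ × ℚ := AddMonoidHom.mk' f hadd
  have hz : z = z.1 • ((1 : ℚ), (0 : ℚ)) + z.2 • ((0 : ℚ), (1 : ℚ)) := by ext <;> simp
  have : f z = z.1 • f (1, 0) + z.2 • f (0, 1) := by
    conv_lhs => rw [hz, hadd]
    exact congrArg₂ (· + ·) (map_rat_smul φ _ _) (map_rat_smul φ _ _)
  rw [this, hunit]
  ext <;> simp [shear, mul_comm]

section Shear

variable {lam : ℝ} {b d : ℚ}

lemma shear_ne_zero (hlam : 0 < lam) (hreflect : ∀ z, shear b d z ∈ ratCone lam → z ∈ ratCone lam) :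
    d ≠ 0 := by
  rintro rfl
  -- `(-b y, y)` lies in the kernel of `shear b 0`, so it would lie in the cone for `y = ±1`.
  have hkernel : ∀ y : ℚ, y ≠ 0 → lam * |(y : ℝ)| < ((-(b * y) : ℚ) : ℝ) := fun y hy =>
    lt_of_mk_mem_ratCone (hreflect (-(b * y), y) (Or.inl (by simp [shear]))) hy
  have h₁ := hkernel 1 one_ne_zero
  have h₂ := hkernel (-1) (by norm_num)
  push_cast at h₁ h₂
  simp only [abs_one, abs_neg] at h₁ h₂
  linarith

lemma lam_mul_abs_sub_le_of_shear_maps (hd : d ≠ 0)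
    (hmaps : ∀ z ∈ ratCone lam, shear b d z ∈ ratCone lam) {y : ℚ} (hy : y ≠ 0) :
    lam * |(d : ℝ)| * |(y : ℝ)| - b * y ≤ lam * |(y : ℝ)| := by
  refine le_of_forall_lt_rat_imp_le fun q hq => le_of_lt ?_
  have h := lt_of_mk_mem_ratCone (hmaps _ (mk_mem_ratCone hq)) (mul_ne_zero hd hy)
  push_cast [abs_mul] at h
  linarith

lemma lam_mul_abs_add_le_of_shear_reflects
    (hreflect : ∀ z, shear b d z ∈ ratCone lam → z ∈ ratCone lam) {y : ℚ} (hy : y ≠ 0) :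
    lam * |(y : ℝ)| + b * y ≤ lam * |(d : ℝ)| * |(y : ℝ)| := by
  refine le_of_forall_lt_rat_imp_le fun q hq => le_of_lt ?_
  have himage : shear b d (q - b * y, y) = (q, d * y) := by simp [shear]
  have hmem : (q, d * y) ∈ ratCone lam := mk_mem_ratCone (by push_cast [abs_mul]; linarith)
  have h := lt_of_mk_mem_ratCone (hreflect _ (himage ▸ hmem)) hy
  push_cast at h
  linarith

lemma eq_zero_and_abs_eq_one_of_shear_mem_ratCone_iff (hlam : 0 < lam)
    (hcone : ∀ z, shear b d z ∈ ratCone lam ↔ z ∈ ratCone lam) : b = 0 ∧ |d| = 1 := by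
  have hreflect z := (hcone z).mp
  have hd := shear_ne_zero hlam hreflect
  have hmaps z (hz : z ∈ ratCone lam) := (hcone z).mpr hz
  have h₁ := lam_mul_abs_sub_le_of_shear_maps hd hmaps one_ne_zero
  have h₂ := lam_mul_abs_sub_le_of_shear_maps hd hmaps (neg_ne_zero.mpr one_ne_zero)
  have h₃ := lam_mul_abs_add_le_of_shear_reflects hreflect one_ne_zero
  have h₄ := lam_mul_abs_add_le_of_shear_reflects hreflect (neg_ne_zero.mpr one_ne_zero)
  push_cast at h₁ h₂ h₃ h₄
  simp only [abs_one, abs_neg, mul_one] at h₁ h₂ h₃ h₄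
  have hb : (b : ℝ) = 0 := by linarith
  have hd₁ : |(d : ℝ)| = 1 := mul_left_cancel₀ hlam.ne' (by linarith)
  exact ⟨by exact_mod_cast hb, by exact_mod_cast hd₁⟩

end Shear

theorem stmt_9_general (lam : ℝ) (hlam : 0 < lam)
    (C : Set (ℚ × ℚ))
    (hC : C = {z : ℚ × ℚ | z = (0, 0) ∨ (z.1 : ℝ) > lam * |(z.2 : ℝ)|})
    (f : ℚ × ℚ → ℚ × ℚ)
    (hadd : ∀ a b : ℚ × ℚ, f (a + b) = f a + f b)
    (hunit : f (1, 0) = (1, 0))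
    (hcone : ∀ z : ℚ × ℚ, f z ∈ C ↔ z ∈ C) :
    f = id ∨ f = fun z : ℚ × ℚ => (z.1, -z.2) := by
  subst hC
  rw [eq_shear_of_map_add hadd hunit] at hcone ⊢
  obtain ⟨hb, hd⟩ := eq_zero_and_abs_eq_one_of_shear_mem_ratCone_iff hlam hcone
  rw [hb]
  rcases (abs_eq zero_le_one).mp hd with hd | hd <;> rw [hd]
  · left; funext z; simp [shear]
  · right; funext z; simp [shear]

/-- setting CTXC: if `f : ℚ × ℚ → ℚ × ℚ` is an additive bijection fixing
`(1, 0)` which preserves the cone `C_λ` in both directions, then `f` is the identity or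
the flip `σ(x, y) = (x, −y)`.  In particular, `(ℚ × ℚ, C_λ, (1,0))` has exactly one
nontrivial automorphism as a scaled ordered group. -/
theorem stmt_9 (lam : ℝ) (hlam : 0 < lam)
    (C : Set (ℚ × ℚ))
    (hC : C = {z : ℚ × ℚ | z = (0, 0) ∨ (z.1 : ℝ) > lam * |(z.2 : ℝ)|})
    (f : ℚ × ℚ → ℚ × ℚ) (hbij : Function.Bijective f)
    (hadd : ∀ a b : ℚ × ℚ, f (a + b) = f a + f b)
    (hunit : f (1, 0) = (1, 0))
    (hcone : ∀ z : ℚ × ℚ, f z ∈ C ↔ z ∈ C) :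
    f = id ∨ f = fun z : ℚ × ℚ => (z.1, -z.2) :=
  stmt_9_general lam hlam C hC f hadd hunit hcone
end

section
/- In the setting of CTXB: for every n ≥ 0 one has t(n)/r(n) ≤ 1 − s(n)/r(n); equivalently, t(n) + s(n) ≤ r(n). -/
open Finset

/-- The defect `l r - t' - s'` of the next step equals `(l - 2c)(r - t - s) + c (r - s)`. -/
lemma recursion_step_add_le {R : Type*} [CommRing R] [LinearOrder R] [IsStrictOrderedRing R]
    {l c r s t : R} (hc : 0 ≤ c) (hcl : 2 * c ≤ l) (hsr : s ≤ r) (h : t + s ≤ r) :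
    ((l - c) * t + c * (r - t)) + (l - c) * s ≤ l * r := by
  nlinarith [mul_le_mul_of_nonneg_left h (sub_nonneg.2 hcl), mul_le_mul_of_nonneg_left hsr hc]

theorem stmt_11_general (l c : ℕ → ℕ)
    (hl : ∀ n, 1 ≤ n → 2 * c n + 1 ≤ l n)
    (d : ℕ → ℕ) (hd : ∀ n, d n = l n - c n)
    (r s : ℕ → ℕ)
    (hr : ∀ n, r n = ∏ k ∈ Finset.Icc 1 n, l k)
    (hs : ∀ n, s n = ∏ k ∈ Finset.Icc 1 n, d k)
    (t : ℕ → ℤ) (ht0 : t 0 = 0)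
    (ht : ∀ n, t (n + 1) = (d (n + 1) : ℤ) * t n + (c (n + 1) : ℤ) * ((r n : ℤ) - t n)) :
    ∀ n, t n + (s n : ℤ) ≤ (r n : ℤ) := by
  have hsr (n : ℕ) : s n ≤ r n := by
    rw [hs, hr]
    exact prod_le_prod' fun k _ => hd k ▸ Nat.sub_le _ _
  intro n
  induction n with
  | zero => simp [ht0, hs, hr]
  | succ n ih =>
    have hcl : 2 * c (n + 1) ≤ l (n + 1) := by linarith [hl (n + 1) n.succ_pos]
    have hr_succ : r (n + 1) = l (n + 1) * r n := by
      rw [hr, hr, prod_Icc_succ_top n.succ_pos, mul_comm]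
    have hs_succ : s (n + 1) = (l (n + 1) - c (n + 1)) * s n := by
      rw [hs, hs, prod_Icc_succ_top n.succ_pos, mul_comm, hd]
    rw [ht, hr_succ, hs_succ, hd, Nat.cast_mul, Nat.cast_mul, Nat.cast_sub (by omega)]
    exact recursion_step_add_le (Nat.cast_nonneg _) (by exact_mod_cast hcl) (by exact_mod_cast hsr n) ih

/-- setting CTXB: for every `n` one has `t(n)/r(n) ≤ 1 − s(n)/r(n)`,
equivalently `t(n) + s(n) ≤ r(n)`. -/
theorem stmt_11 (l c : ℕ → ℕ) (hc : ∀ n, 1 ≤ n → 1 ≤ c n)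
    (hl : ∀ n, 1 ≤ n → 2 * c n + 1 ≤ l n)
    (d : ℕ → ℕ) (hd : ∀ n, d n = l n - c n)
    (r s : ℕ → ℕ)
    (hr : ∀ n, r n = ∏ k ∈ Finset.Icc 1 n, l k)
    (hs : ∀ n, s n = ∏ k ∈ Finset.Icc 1 n, d k)
    (t : ℕ → ℤ) (ht0 : t 0 = 0)
    (ht : ∀ n, t (n + 1) = (d (n + 1) : ℤ) * t n + (c (n + 1) : ℤ) * ((r n : ℤ) - t n)) :
    ∀ n, t n + (s n : ℤ) ≤ (r n : ℤ) :=
  stmt_11_general l c hl d hd r s hr hs t ht0 ht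
end

section
/- In the setting of CTXB: the sequence n ↦ t(n)/r(n) is strictly increasing (so 0 = t(0)/r(0) < t(1)/r(1) < t(2)/r(2) < ⋯), and t(n)/r(n) < 1 − κ₁ for every n ≥ 0. -/
/-!
Put `p k = c (k+1) / l (k+1)`. Then `t n / r n` is the probability that an odd number of
independent events of probabilities `p 0, …, p (n-1)` occur, and `s n / r n = ∏ (1 - p k)` is
the probability that none occurs. Since `1 - 2 * (t n / r n) = ∏ (1 - 2 p k) > 0`, each step
raises `t n / r n` by `p n * (1 - 2 * (t n / r n)) > 0`. An odd number of events excludes none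
occurring, so `t n / r n ≤ 1 - s n / r n`, and `s n / r n` decreases strictly to `κ₁`.
-/

open Filter Finset

def oddEventProb (p : ℕ → ℝ) : ℕ → ℝ
  | 0 => 0
  | n + 1 => (1 - p n) * oddEventProb p n + p n * (1 - oddEventProb p n)

namespace oddEventProb

variable {p : ℕ → ℝ}

@[simp]
lemma zero : oddEventProb p 0 = 0 := rfl

lemma succ (n : ℕ) :
    oddEventProb p (n + 1) = (1 - p n) * oddEventProb p n + p n * (1 - oddEventProb p n) := rfl

lemma one_sub_two_mul (n : ℕ) :
    1 - 2 * oddEventProb p n = ∏ k ∈ range n, (1 - 2 * p k) := by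
  induction n with
  | zero => simp
  | succ n ih => rw [prod_range_succ, ← ih, succ]; ring

variable (hp : ∀ k, 0 < p k) (hp2 : ∀ k, 2 * p k < 1)
include hp2

lemma two_mul_lt_one (n : ℕ) : 2 * oddEventProb p n < 1 := by
  have : 0 < ∏ k ∈ range n, (1 - 2 * p k) := prod_pos fun k _ ↦ by linarith [hp2 k]
  linarith [one_sub_two_mul (p := p) n]

include hp

lemma strictMono : StrictMono (oddEventProb p) :=
  strictMono_nat_of_lt_succ fun n ↦ by
    have step :
        oddEventProb p (n + 1) - oddEventProb p n = p n * (1 - 2 * oddEventProb p n) := by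
      rw [succ]; ring
    nlinarith [hp n, two_mul_lt_one hp2 n]

lemma nonneg (n : ℕ) : 0 ≤ oddEventProb p n :=
  zero (p := p) ▸ (strictMono hp hp2).monotone (Nat.zero_le n)

lemma prod_one_sub_le_one_sub (n : ℕ) : ∏ k ∈ range n, (1 - p k) ≤ 1 - oddEventProb p n := by
  induction n with
  | zero => simp
  | succ n ih =>
    have hpn : 0 ≤ 1 - p n := by linarith [hp n, hp2 n]
    calc ∏ k ∈ range (n + 1), (1 - p k)
        = (1 - p n) * ∏ k ∈ range n, (1 - p k) := by rw [prod_range_succ, mul_comm]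
      _ ≤ (1 - p n) * (1 - oddEventProb p n) := mul_le_mul_of_nonneg_left ih hpn
      _ ≤ (1 - p n) * (1 - oddEventProb p n) + p n * oddEventProb p n := by
        linarith [mul_nonneg (hp n).le (nonneg hp hp2 n)]
      _ = 1 - oddEventProb p (n + 1) := by rw [succ]; ring

lemma lt_one_sub_of_tendsto {κ : ℝ}
    (hκ : Tendsto (fun n ↦ ∏ k ∈ range n, (1 - p k)) atTop (nhds κ)) (n : ℕ) :
    oddEventProb p n < 1 - κ := by
  have hanti : StrictAnti fun n ↦ ∏ k ∈ range n, (1 - p k) :=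
    strictAnti_nat_of_succ_lt fun n ↦ by
      have hpos : 0 < ∏ k ∈ range n, (1 - p k) := prod_pos fun k _ ↦ by linarith [hp k, hp2 k]
      rw [prod_range_succ]
      nlinarith [hp n]
  have : κ < 1 - oddEventProb p n :=
    calc κ ≤ ∏ k ∈ range (n + 1), (1 - p k) := hanti.antitone.le_of_tendsto hκ _
      _ < ∏ k ∈ range n, (1 - p k) := hanti n.lt_succ_self
      _ ≤ 1 - oddEventProb p n := prod_one_sub_le_one_sub hp hp2 n
  linarith

end oddEventProb

/-- setting CTXB: the sequence `n ↦ t(n)/r(n)` is strictly increasing and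
bounded above by `1 − κ₁`, where `κ₁ = lim_n s(n)/r(n)`. -/
theorem stmt_12 (l c : ℕ → ℕ) (hc : ∀ n, 1 ≤ n → 1 ≤ c n)
    (hl : ∀ n, 1 ≤ n → 2 * c n + 1 ≤ l n)
    (d : ℕ → ℕ) (hd : ∀ n, d n = l n - c n)
    (r s : ℕ → ℕ)
    (hr : ∀ n, r n = ∏ k ∈ Finset.Icc 1 n, l k)
    (hs : ∀ n, s n = ∏ k ∈ Finset.Icc 1 n, d k)
    (t : ℕ → ℤ) (ht0 : t 0 = 0)
    (ht : ∀ n, t (n + 1) = (d (n + 1) : ℤ) * t n + (c (n + 1) : ℤ) * ((r n : ℤ) - t n))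
    (κ₁ : ℝ)
    (hκ₁ : Tendsto (fun n => (s n : ℝ) / (r n : ℝ)) atTop (nhds κ₁)) :
    StrictMono (fun n => (t n : ℝ) / (r n : ℝ)) ∧
      ∀ n, (t n : ℝ) / (r n : ℝ) < 1 - κ₁ := by
  set p : ℕ → ℝ := fun k ↦ c (k + 1) / l (k + 1) with hp_def
  have hl_pos (k : ℕ) : (0 : ℝ) < l (k + 1) := by
    exact_mod_cast (hl (k + 1) k.succ_pos).trans_lt' (by omega)
  have hp (k : ℕ) : 0 < p k := div_pos (by exact_mod_cast hc (k + 1) k.succ_pos) (hl_pos k)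
  have hp2 (k : ℕ) : 2 * p k < 1 := by
    rw [hp_def, mul_div_assoc', div_lt_one (hl_pos k)]
    exact_mod_cast hl (k + 1) k.succ_pos
  have hc_real (k : ℕ) : (c (k + 1) : ℝ) = l (k + 1) * p k := by
    rw [hp_def, mul_div_cancel₀ _ (hl_pos k).ne']
  have hd_real (k : ℕ) : (d (k + 1) : ℝ) = l (k + 1) * (1 - p k) := by
    rw [hd, Nat.cast_sub (by linarith [hl (k + 1) k.succ_pos]), hc_real]; ring
  have hr_succ (n : ℕ) : (r (n + 1) : ℝ) = r n * l (n + 1) := by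
    rw [hr, hr, prod_Icc_succ_top (by omega)]; push_cast; rfl
  have hr_pos (n : ℕ) : (0 : ℝ) < r n := by
    rw [hr]; push_cast; exact prod_pos fun k hk ↦ by
      obtain ⟨m, rfl⟩ := Nat.exists_eq_add_of_le' (mem_Icc.mp hk).1; exact hl_pos m
  have ht_eq (n : ℕ) : (t n : ℝ) / r n = oddEventProb p n := by
    induction n with
    | zero => simp [ht0]
    | succ n ih =>
      rw [oddEventProb.succ, ← ih, ht, hr_succ]; push_cast
      rw [hd_real, hc_real]; field_simp [(hr_pos n).ne', (hl_pos n).ne']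
  have hs_eq (n : ℕ) : (s n : ℝ) / r n = ∏ k ∈ range n, (1 - p k) := by
    induction n with
    | zero => simp [hs, hr]
    | succ n ih =>
      rw [prod_range_succ, ← ih, hs, prod_Icc_succ_top (by omega), ← hs, hr_succ]; push_cast
      rw [hd_real]; field_simp [(hr_pos n).ne', (hl_pos n).ne']
  simp only [ht_eq]
  simp only [hs_eq] at hκ₁
  exact ⟨oddEventProb.strictMono hp hp2, oddEventProb.lt_one_sub_of_tendsto hp hp2 hκ₁⟩
end

section
/- In the setting of CTXB, assume κ₁ > 1/2. Then the limit λ' = lim_{n→∞} t(n)/s(n) exists and satisfies 0 < c(1)/l(1) ≤ κ₁ λ' < 1 − κ₁ < 1/2; moreover the limit κ₁' = lim_{n→∞} s(n)/(r(n) − t(n)) exists and κ₁' = κ₁/(1 − κ₁ λ'). -/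
/-!
With `u = r - t`, the pair `(t, u)` obeys the symmetric recurrence `t' = d t + c u`,
`u' = d u + c t`, while `s' = d s` and `r = t + u`. Hence `t/s` and `u/s` are nondecreasing,
and since their sum `r/s` tends to `1/κ₁`, both converge, to `λ'` and `1/κ₁ - λ'`.
Moreover `u - t` is multiplied by `d - c > 0` at each step, so `t < u`, which makes `t/r`
nondecreasing; its value `c(1)/l(1)` at `n = 1` bounds its limit `κ₁ λ'` from below.
The strict bound `κ₁ λ' < 1 - κ₁` says `lim u/s > 1`, which holds because `u/s` already
increases strictly from `n = 1` to `n = 2`.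
-/

open Filter

structure PairRecurrence (C D T U : ℕ → ℝ) : Prop where
  step_fst : ∀ n, T (n + 1) = D n * T n + C n * U n
  step_snd : ∀ n, U (n + 1) = D n * U n + C n * T n

namespace PairRecurrence

variable {C D S T U : ℕ → ℝ}

theorem swap (h : PairRecurrence C D T U) : PairRecurrence C D U T :=
  ⟨h.step_snd, h.step_fst⟩

theorem sub_succ (h : PairRecurrence C D T U) (n : ℕ) :
    U (n + 1) - T (n + 1) = (D n - C n) * (U n - T n) := by
  rw [h.step_fst, h.step_snd]
  ring

theorem nonneg_and_lt (h : PairRecurrence C D T U) (hC : ∀ n, 0 ≤ C n)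
    (hCD : ∀ n, C n < D n) (hT₀ : 0 ≤ T 0) (hTU₀ : T 0 < U 0) (n : ℕ) :
    0 ≤ T n ∧ T n < U n := by
  induction n with
  | zero => exact ⟨hT₀, hTU₀⟩
  | succ n ih =>
    obtain ⟨hT, hTU⟩ := ih
    have hD : 0 < D n := (hC n).trans_lt (hCD n)
    refine ⟨?_, sub_pos.1 ?_⟩
    · rw [h.step_fst]
      exact add_nonneg (mul_nonneg hD.le hT) (mul_nonneg (hC n) (hT.trans hTU.le))
    · rw [h.sub_succ]
      exact mul_pos (sub_pos.2 (hCD n)) (sub_pos.2 hTU)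

theorem div_succ (h : PairRecurrence C D T U) {n : ℕ} (hS : S (n + 1) = D n * S n)
    (hD : D n ≠ 0) (hSn : S n ≠ 0) :
    T (n + 1) / S (n + 1) = T n / S n + C n / D n * (U n / S n) := by
  rw [h.step_fst, hS]
  field_simp

theorem div_lt_div_succ (h : PairRecurrence C D T U) {n : ℕ} (hS : S (n + 1) = D n * S n)
    (hD : 0 < D n) (hSn : 0 < S n) (hC : 0 < C n) (hU : 0 < U n) :
    T n / S n < T (n + 1) / S (n + 1) := by
  rw [h.div_succ hS hD.ne' hSn.ne']
  exact lt_add_of_pos_right _ (mul_pos (div_pos hC hD) (div_pos hU hSn))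

theorem monotone_div (h : PairRecurrence C D T U) (hS : ∀ n, S (n + 1) = D n * S n)
    (hD : ∀ n, 0 < D n) (hSpos : ∀ n, 0 < S n) (hC : ∀ n, 0 ≤ C n) (hU : ∀ n, 0 ≤ U n) :
    Monotone fun n => T n / S n := by
  refine monotone_nat_of_le_succ fun n => ?_
  simp only [h.div_succ (hS n) (hD n).ne' (hSpos n).ne', le_add_iff_nonneg_right]
  exact mul_nonneg (div_nonneg (hC n) (hD n).le) (div_nonneg (hU n) (hSpos n).le)

theorem monotone_div_add (h : PairRecurrence C D T U) (hD : ∀ n, 0 < D n)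
    (hC : ∀ n, 0 ≤ C n) (hT : ∀ n, 0 ≤ T n) (hTU : ∀ n, T n < U n) :
    Monotone fun n => T n / (T n + U n) := by
  refine monotone_nat_of_le_succ fun n => ?_
  have hsum : 0 < T n + U n := by linarith [hT n, hTU n]
  have hsum_succ : T (n + 1) + U (n + 1) = (D n + C n) * (T n + U n) := by
    rw [h.step_fst, h.step_snd]
    ring
  rw [hsum_succ, div_le_div_iff₀ hsum (mul_pos (add_pos_of_pos_of_nonneg (hD n) (hC n)) hsum),
    h.step_fst]
  -- the difference of the two sides is `C (U - T) (U + T)`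
  nlinarith [mul_nonneg (mul_nonneg (hC n) (sub_nonneg.2 (hTU n).le)) hsum.le]

end PairRecurrence

theorem exists_tendsto_of_monotone_of_tendsto_add {a b : ℕ → ℝ} {L : ℝ} (ha : Monotone a)
    (hb : Monotone b) (hab : Tendsto (fun n => a n + b n) atTop (nhds L)) :
    ∃ α, Tendsto a atTop (nhds α) ∧ Tendsto b atTop (nhds (L - α)) := by
  have hle : ∀ n, a n + b n ≤ L := (ha.add hb).ge_of_tendsto hab
  have hbdd : BddAbove (Set.range a) := ⟨L - b 0, by
    rintro _ ⟨n, rfl⟩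
    linarith [hle n, hb (Nat.zero_le n)]⟩
  have hα := tendsto_atTop_ciSup ha hbdd
  exact ⟨_, hα, (hab.sub hα).congr fun n => add_sub_cancel_left _ _⟩

theorem PairRecurrence.exists_tendsto_div {C D S T U : ℕ → ℝ} (h : PairRecurrence C D T U)
    (hS : ∀ n, S (n + 1) = D n * S n) (hSpos : ∀ n, 0 < S n) (hT₀ : T 0 = 0) (hU₀ : U 0 = S 0)
    (hC : ∀ n, 0 < C n) (hCD : ∀ n, C n < D n) {κ : ℝ} (hκ : 0 < κ)
    (hlim : Tendsto (fun n => S n / (T n + U n)) atTop (nhds κ)) :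
    ∃ lam, Tendsto (fun n => T n / S n) atTop (nhds lam) ∧ C 0 / (C 0 + D 0) ≤ κ * lam ∧
      κ * lam < 1 - κ ∧ Tendsto (fun n => S n / U n) atTop (nhds (κ / (1 - κ * lam))) := by
  have hC' : ∀ n, 0 ≤ C n := fun n => (hC n).le
  have hD : ∀ n, 0 < D n := fun n => (hC n).trans (hCD n)
  have hTU := h.nonneg_and_lt hC' hCD hT₀.ge (by rw [hT₀, hU₀]; exact hSpos 0)
  have hT : ∀ n, 0 ≤ T n := fun n => (hTU n).1
  have hU : ∀ n, 0 < U n := fun n => (hT n).trans_lt (hTU n).2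
  have hmono_T := h.monotone_div hS hD hSpos hC' fun n => (hU n).le
  have hmono_U := h.swap.monotone_div hS hD hSpos hC' hT
  have hsum : Tendsto (fun n => T n / S n + U n / S n) atTop (nhds κ⁻¹) :=
    (hlim.inv₀ hκ.ne').congr fun n => by rw [inv_div, add_div]
  obtain ⟨lam, hlam, hlimU⟩ := exists_tendsto_of_monotone_of_tendsto_add hmono_T hmono_U hsum
  have hT₁ : T 1 = C 0 * S 0 := by simp [h.step_fst, hT₀, hU₀]
  have hU₁ : U 1 = D 0 * S 0 := by simp [h.step_snd, hT₀, hU₀]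
  have hlow : C 0 / (C 0 + D 0) ≤ κ * lam := by
    have hlimTU : Tendsto (fun n => T n / (T n + U n)) atTop (nhds (κ * lam)) :=
      (hlim.mul hlam).congr fun n => by rw [mul_comm, div_mul_div_cancel₀ (hSpos n).ne']
    have := (h.monotone_div_add hD hC' hT fun n => (hTU n).2).ge_of_tendsto hlimTU 1
    rwa [hT₁, hU₁, ← add_mul, mul_div_mul_right _ _ (hSpos 0).ne'] at this
  have hlimU_gt : 1 < κ⁻¹ - lam := calc
    1 = U 0 / S 0 := by rw [hU₀, div_self (hSpos 0).ne']
    _ ≤ U 1 / S 1 := hmono_U zero_le_one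
    _ < U 2 / S 2 := h.swap.div_lt_div_succ (hS 1) (hD 1) (hSpos 1) (hC 1)
        (by rw [hT₁]; exact mul_pos (hC 0) (hSpos 0))
    _ ≤ κ⁻¹ - lam := hmono_U.ge_of_tendsto hlimU 2
  have hupp : κ * lam < 1 - κ := by
    have := mul_lt_mul_of_pos_left hlimU_gt hκ
    rwa [mul_sub, mul_inv_cancel₀ hκ.ne', mul_one, lt_sub_comm] at this
  have hκ' : κ / (1 - κ * lam) = (κ⁻¹ - lam)⁻¹ := by field_simp
  refine ⟨lam, hlam, hlow, hupp, ?_⟩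
  rw [hκ']
  exact (hlimU.inv₀ (by linarith)).congr fun n => inv_div _ _

/-- setting CTXB: if `κ₁ > 1/2`, then `λ' = lim_n t(n)/s(n)` exists with
`0 < c(1)/l(1) ≤ κ₁ λ' < 1 − κ₁ < 1/2`, and `κ₁' = lim_n s(n)/(r(n) − t(n))` exists with
`κ₁' = κ₁/(1 − κ₁ λ')`. -/
theorem stmt_13 (l c : ℕ → ℕ) (hc : ∀ n, 1 ≤ n → 1 ≤ c n)
    (hl : ∀ n, 1 ≤ n → 2 * c n + 1 ≤ l n)
    (d : ℕ → ℕ) (hd : ∀ n, d n = l n - c n)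
    (r s : ℕ → ℕ)
    (hr : ∀ n, r n = ∏ k ∈ Finset.Icc 1 n, l k)
    (hs : ∀ n, s n = ∏ k ∈ Finset.Icc 1 n, d k)
    (t : ℕ → ℤ) (ht0 : t 0 = 0)
    (ht : ∀ n, t (n + 1) = (d (n + 1) : ℤ) * t n + (c (n + 1) : ℤ) * ((r n : ℤ) - t n))
    (κ₁ : ℝ)
    (hκ₁ : Tendsto (fun n => (s n : ℝ) / (r n : ℝ)) atTop (nhds κ₁))
    (hhalf : κ₁ > 1 / 2) :
    ∃ lam' : ℝ,
      Tendsto (fun n => (t n : ℝ) / (s n : ℝ)) atTop (nhds lam') ∧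
      0 < (c 1 : ℝ) / (l 1 : ℝ) ∧
      (c 1 : ℝ) / (l 1 : ℝ) ≤ κ₁ * lam' ∧
      κ₁ * lam' < 1 - κ₁ ∧
      1 - κ₁ < 1 / 2 ∧
      Tendsto (fun n => (s n : ℝ) / ((r n : ℝ) - (t n : ℝ))) atTop
        (nhds (κ₁ / (1 - κ₁ * lam'))) := by
  have hcd : ∀ n, c (n + 1) + d (n + 1) = l (n + 1) ∧ c (n + 1) < d (n + 1) := fun n => by
    have := hl (n + 1) n.succ_pos
    rw [hd]
    omega
  have hlR : ∀ n, (l (n + 1) : ℝ) = c (n + 1) + d (n + 1) := fun n => by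
    rw [← (hcd n).1]; push_cast; rfl
  have hr' : ∀ n, (r (n + 1) : ℝ) = r n * l (n + 1) := fun n => by
    rw [hr, hr, Finset.prod_Icc_succ_top (by omega)]; push_cast; ring
  have hs' : ∀ n, (s (n + 1) : ℝ) = d (n + 1) * s n := fun n => by
    rw [hs, hs, Finset.prod_Icc_succ_top (by omega)]; push_cast; ring
  have hrec : PairRecurrence (fun n => c (n + 1)) (fun n => d (n + 1)) (fun n => t n)
      (fun n => r n - t n) :=
    ⟨fun n => by simp [ht], fun n => by simp only [hr', hlR, ht]; push_cast; ring⟩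
  have hs_pos : ∀ n, (0 : ℝ) < s n := fun n => by
    rw [hs]
    exact_mod_cast Finset.prod_pos fun k hk => by
      have := hl k (Finset.mem_Icc.1 hk).1
      rw [hd]
      omega
  obtain ⟨lam', hlam, hlow, hupp, hlim⟩ := hrec.exists_tendsto_div hs' hs_pos (by simp [ht0]) (by simp [ht0, hr, hs])
    (fun n => by exact_mod_cast hc (n + 1) n.succ_pos) (fun n => by exact_mod_cast (hcd n).2)
    (by linarith) (hκ₁.congr fun n => by rw [add_sub_cancel])
  have hc₁ : (0 : ℝ) < c 1 := by exact_mod_cast hc 1 le_rfl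
  have hl₁ : (0 : ℝ) < l 1 := Nat.cast_pos.2 (by have := hl 1 le_rfl; omega)
  exact ⟨lam', hlam, div_pos hc₁ hl₁, by rwa [hlR 0], hupp, by linarith, hlim⟩
end

section
/- In the setting of CTXB, assume κ₁ > 1/2. Then the limit κ₁' = lim_{n→∞} s(n)/(r(n) − t(n)) exists and is strictly positive, and it satisfies κ₁ < κ₁' < 2κ₁ and κ₁' − κ₁ < min(κ₁, κ₁²/(κ₁' − κ₁)). -/
/-!
With `x k = c(k+1)/l(k+1)` we have `s(n)/r(n) = ∏_{k<n} (1 - x k)`, and the recursion for `t`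
makes `r - 2t` multiplicative: `(r(n) - 2t(n))/r(n) = ∏_{k<n} (1 - 2 x k)`. As
`r - t = (r + (r - 2t))/2`, the quotient `s/(r - t) = 2(s/r)/(1 + (r - 2t)/r)` tends to
`κ₁' = 2κ₁/(1 + β)`, where `β` is the limit of the second product. The first product has a
positive limit, so `x k → 0`; once `x ≤ 1/4`, the inequality `(1 - x)³ ≤ 1 - 2x` bounds the second
product below by a positive multiple of `κ₁³`, so `β > 0`, while `β ≤ 1 - 2 x 0 < 1`. The stated
inequalities are elementary consequences of `0 < β < 1`.
-/

open Filter Topology Finset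

theorem prod_Icc_one_eq_prod_range {M : Type*} [CommMonoid M] (f : ℕ → M) (n : ℕ) :
    ∏ k ∈ Icc 1 n, f k = ∏ k ∈ range n, f (k + 1) := by
  induction n with
  | zero => simp
  | succ n ih => rw [prod_Icc_succ_top (by omega), ih, prod_range_succ]

theorem sub_two_mul_eq_mul_prod {R : Type*} [CommRing R] {l c d r t : ℕ → R}
    (hd : ∀ n, d (n + 1) = l (n + 1) - c (n + 1)) (hr : ∀ n, r (n + 1) = r n * l (n + 1))
    (ht : ∀ n, t (n + 1) = d (n + 1) * t n + c (n + 1) * (r n - t n)) (n : ℕ) :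
    r n - 2 * t n = (r 0 - 2 * t 0) * ∏ k ∈ range n, (l (k + 1) - 2 * c (k + 1)) := by
  induction n with
  | zero => simp
  | succ n ih =>
    rw [prod_range_succ, ← mul_assoc, ← ih, hr, ht, hd]
    ring

theorem one_sub_pow_three_le_one_sub_two_mul {x : ℝ} (h0 : 0 ≤ x) (h1 : x ≤ 1 / 4) :
    (1 - x) ^ 3 ≤ 1 - 2 * x := by
  nlinarith [mul_nonneg h0 (mul_nonneg h0 h0)]

theorem antitone_prod_range {f : ℕ → ℝ} (h0 : ∀ k, 0 ≤ f k) (h1 : ∀ k, f k ≤ 1) :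
    Antitone fun n => ∏ k ∈ range n, f k :=
  antitone_nat_of_succ_le fun n => by
    rw [prod_range_succ]
    exact mul_le_of_le_one_right (prod_nonneg fun k _ => h0 k) (h1 n)

section ProdOneSub

variable {x : ℕ → ℝ}

theorem prod_range_one_sub_pow_three_le (hx0 : ∀ k, 0 ≤ x k) (hx : ∀ k, x k ≤ 1 / 4) (n : ℕ) :
    (∏ k ∈ range n, (1 - x k)) ^ 3 ≤ ∏ k ∈ range n, (1 - 2 * x k) := by
  rw [← prod_pow]
  exact prod_le_prod (fun k _ => pow_nonneg (by linarith [hx k]) 3)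
    fun k _ => one_sub_pow_three_le_one_sub_two_mul (hx0 k) (hx k)

theorem tendsto_zero_of_tendsto_prod_range_one_sub (hx : ∀ k, x k < 1) {κ : ℝ} (hκ : κ ≠ 0)
    (h : Tendsto (fun n => ∏ k ∈ range n, (1 - x k)) atTop (𝓝 κ)) : Tendsto x atTop (𝓝 0) := by
  have hP : ∀ n, ∏ k ∈ range n, (1 - x k) ≠ 0 := fun n =>
    prod_ne_zero_iff.2 fun k _ => (sub_pos.2 (hx k)).ne'
  have hratio := (h.comp (tendsto_add_atTop_nat 1)).div h hκ
  rw [div_self hκ] at hratio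
  have hsub := (tendsto_const_nhds (x := (1 : ℝ))).sub hratio
  rw [sub_self] at hsub
  refine hsub.congr fun n => ?_
  rw [Pi.div_apply, Function.comp_apply, prod_range_succ, mul_div_cancel_left₀ _ (hP n)]
  ring

theorem exists_pos_tendsto_prod_range_one_sub_two_mul (hx0 : ∀ k, 0 ≤ x k)
    (hx1 : ∀ k, 2 * x k < 1) {κ : ℝ} (hκ : 0 < κ)
    (h : Tendsto (fun n => ∏ k ∈ range n, (1 - x k)) atTop (𝓝 κ)) :
    ∃ β, 0 < β ∧ Tendsto (fun n => ∏ k ∈ range n, (1 - 2 * x k)) atTop (𝓝 β) := by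
  have hB0 : ∀ n, 0 < ∏ k ∈ range n, (1 - 2 * x k) := fun n =>
    prod_pos fun k _ => by linarith [hx1 k]
  have hBlim := tendsto_atTop_ciInf
    (antitone_prod_range (f := fun k => 1 - 2 * x k) (fun k => by linarith [hx1 k])
      fun k => by linarith [hx0 k])
    ⟨0, by rintro _ ⟨n, rfl⟩; exact (hB0 n).le⟩
  refine ⟨_, ?_, hBlim⟩
  have hx : ∀ k, x k < 1 := fun k => by linarith [hx0 k, hx1 k]
  have hA0 : ∀ n, 0 < ∏ k ∈ range n, (1 - x k) := fun n =>
    prod_pos fun k _ => sub_pos.2 (hx k)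
  have hκA : ∀ n, κ ≤ ∏ k ∈ range n, (1 - x k) :=
    (antitone_prod_range (f := fun k => 1 - x k) (fun k => (sub_pos.2 (hx k)).le)
      fun k => by linarith [hx0 k]).le_of_tendsto h
  obtain ⟨N, hN⟩ := eventually_atTop.1 <|
    (tendsto_zero_of_tendsto_prod_range_one_sub hx hκ.ne' h).eventually
      (eventually_le_nhds (by norm_num : (0 : ℝ) < 1 / 4))
  set AN := ∏ k ∈ range N, (1 - x k)
  set BN := ∏ k ∈ range N, (1 - 2 * x k)
  refine lt_of_lt_of_le (by have := hA0 N; have := hB0 N; positivity : 0 < BN * (κ / AN) ^ 3) <|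
    ge_of_tendsto hBlim (eventually_atTop.2 ⟨N, fun n hn => ?_⟩)
  obtain ⟨m, rfl⟩ := Nat.exists_eq_add_of_le hn
  calc BN * (κ / AN) ^ 3 ≤ BN * (∏ k ∈ range m, (1 - x (N + k))) ^ 3 := by
        gcongr
        · exact (hB0 N).le
        · exact div_nonneg hκ.le (hA0 N).le
        · rw [div_le_iff₀ (hA0 N), mul_comm, ← prod_range_add]
          exact hκA (N + m)
    _ ≤ BN * ∏ k ∈ range m, (1 - 2 * x (N + k)) := by
        gcongr
        · exact (hB0 N).le
        · exact prod_range_one_sub_pow_three_le (fun _ => hx0 _) (fun _ => hN _ (by omega)) m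
    _ = ∏ k ∈ range (N + m), (1 - 2 * x k) := (prod_range_add _ N m).symm

end ProdOneSub

theorem div_sub_eq_two_mul_div_one_add_div {r s t : ℝ} (hr : r ≠ 0) :
    s / (r - t) = 2 * (s / r) / (1 + (r - 2 * t) / r) := by
  rw [one_add_div hr, ← mul_div_assoc, div_div_div_cancel_right₀ hr,
    show r + (r - 2 * t) = 2 * (r - t) by ring, mul_div_mul_left _ _ two_ne_zero]

section NatSequences

variable {l c d r s : ℕ → ℕ} {t : ℕ → ℤ}

theorem cast_eq_prod_range (hr : ∀ n, r n = ∏ k ∈ Icc 1 n, l k) (n : ℕ) :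
    (r n : ℝ) = ∏ k ∈ range n, (l (k + 1) : ℝ) := by
  rw [hr, prod_Icc_one_eq_prod_range]
  push_cast
  rfl

theorem cast_div_eq_prod_one_sub (hcl : ∀ k, c (k + 1) ≤ l (k + 1)) (hl : ∀ k, 0 < l (k + 1))
    (hd : ∀ n, d n = l n - c n) (hr : ∀ n, r n = ∏ k ∈ Icc 1 n, l k)
    (hs : ∀ n, s n = ∏ k ∈ Icc 1 n, d k) (n : ℕ) :
    (s n : ℝ) / r n = ∏ k ∈ range n, (1 - (c (k + 1) : ℝ) / l (k + 1)) := by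
  rw [cast_eq_prod_range hs, cast_eq_prod_range hr, ← prod_div_distrib]
  refine prod_congr rfl fun k _ => ?_
  rw [hd, Nat.cast_sub (hcl k), one_sub_div (by exact_mod_cast (hl k).ne')]

theorem cast_sub_two_mul_div_eq_prod_one_sub_two_mul (hcl : ∀ k, c (k + 1) ≤ l (k + 1))
    (hl : ∀ k, 0 < l (k + 1)) (hd : ∀ n, d n = l n - c n)
    (hr : ∀ n, r n = ∏ k ∈ Icc 1 n, l k) (ht0 : t 0 = 0)
    (ht : ∀ n, t (n + 1) = (d (n + 1) : ℤ) * t n + (c (n + 1) : ℤ) * ((r n : ℤ) - t n))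
    (n : ℕ) :
    ((r n : ℝ) - 2 * t n) / r n = ∏ k ∈ range n, (1 - 2 * ((c (k + 1) : ℝ) / l (k + 1))) := by
  have hp := sub_two_mul_eq_mul_prod (l := fun k => (l k : ℝ)) (c := fun k => (c k : ℝ))
    (d := fun k => (d k : ℝ)) (r := fun k => (r k : ℝ)) (t := fun k => (t k : ℝ))
    (fun k => by simp only [hd, Nat.cast_sub (hcl k)])
    (fun k => by simp only [cast_eq_prod_range hr, prod_range_succ])
    (fun k => by simp only [ht k]; push_cast; ring) n
  simp only [cast_eq_prod_range hr 0, range_zero, prod_empty, ht0, Int.cast_zero, mul_zero,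
    sub_zero, one_mul] at hp
  rw [hp, cast_eq_prod_range hr, ← prod_div_distrib]
  refine prod_congr rfl fun k _ => ?_
  rw [mul_div_assoc', one_sub_div (by exact_mod_cast (hl k).ne')]

end NatSequences

theorem corner_constant_bounds {κ κ' β : ℝ} (hκ : 0 < κ) (hβ0 : 0 < β) (hβ1 : β < 1)
    (h : κ' * (1 + β) = 2 * κ) :
    0 < κ' ∧ κ < κ' ∧ κ' < 2 * κ ∧ κ' - κ < min κ (κ ^ 2 / (κ' - κ)) := by
  have hlow : κ < κ' := by nlinarith
  have hup : κ' < 2 * κ := by nlinarith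
  have hgap : κ' - κ < κ := by nlinarith
  refine ⟨by linarith, hlow, hup, lt_min hgap ?_⟩
  rw [lt_div_iff₀ (by linarith)]
  nlinarith

/-- setting CTXB: if `κ₁ > 1/2`, then `κ₁' = lim_n s(n)/(r(n) − t(n))`
exists, is strictly positive, and satisfies `κ₁ < κ₁' < 2κ₁` and
`κ₁' − κ₁ < min(κ₁, κ₁²/(κ₁' − κ₁))`. -/
theorem stmt_14 (l c : ℕ → ℕ) (hc : ∀ n, 1 ≤ n → 1 ≤ c n)
    (hl : ∀ n, 1 ≤ n → 2 * c n + 1 ≤ l n)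
    (d : ℕ → ℕ) (hd : ∀ n, d n = l n - c n)
    (r s : ℕ → ℕ)
    (hr : ∀ n, r n = ∏ k ∈ Finset.Icc 1 n, l k)
    (hs : ∀ n, s n = ∏ k ∈ Finset.Icc 1 n, d k)
    (t : ℕ → ℤ) (ht0 : t 0 = 0)
    (ht : ∀ n, t (n + 1) = (d (n + 1) : ℤ) * t n + (c (n + 1) : ℤ) * ((r n : ℤ) - t n))
    (κ₁ : ℝ)
    (hκ₁ : Tendsto (fun n => (s n : ℝ) / (r n : ℝ)) atTop (nhds κ₁))
    (hhalf : κ₁ > 1 / 2) :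
    ∃ κ₁' : ℝ,
      Tendsto (fun n => (s n : ℝ) / ((r n : ℝ) - (t n : ℝ))) atTop (nhds κ₁') ∧
      0 < κ₁' ∧ κ₁ < κ₁' ∧ κ₁' < 2 * κ₁ ∧
      κ₁' - κ₁ < min κ₁ (κ₁ ^ 2 / (κ₁' - κ₁)) := by
  have hcl : ∀ k, c (k + 1) ≤ l (k + 1) := fun k => by linarith [hl (k + 1) (by omega)]
  have hl0 : ∀ k, 0 < l (k + 1) := fun k => by linarith [hl (k + 1) (by omega)]
  set x : ℕ → ℝ := fun k => c (k + 1) / l (k + 1)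
  have hx0 : ∀ k, 0 < x k := fun k =>
    div_pos (by exact_mod_cast hc (k + 1) (by omega)) (by exact_mod_cast hl0 k)
  have hx1 : ∀ k, 2 * x k < 1 := fun k => by
    rw [mul_div_assoc', div_lt_one (by exact_mod_cast hl0 k)]
    exact_mod_cast hl (k + 1) (by omega)
  obtain ⟨β, hβ0, hβ⟩ := exists_pos_tendsto_prod_range_one_sub_two_mul (fun k => (hx0 k).le) hx1
    (by linarith) (by simpa only [cast_div_eq_prod_one_sub hcl hl0 hd hr hs] using hκ₁)
  have hβ1 : β < 1 := by
    refine ((antitone_prod_range (f := fun k => 1 - 2 * x k) (fun k => by linarith [hx1 k])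
      fun k => by linarith [hx0 k]).le_of_tendsto hβ 1).trans_lt ?_
    simp only [prod_range_one]
    linarith [hx0 0]
  refine ⟨2 * κ₁ / (1 + β), ?_,
    corner_constant_bounds (by linarith) hβ0 hβ1 (div_mul_cancel₀ _ (by linarith))⟩
  have hr0 : ∀ n, (r n : ℝ) ≠ 0 := fun n => by
    rw [cast_eq_prod_range hr]
    exact prod_ne_zero_iff.2 fun k _ => by exact_mod_cast (hl0 k).ne'
  simp only [div_sub_eq_two_mul_div_one_add_div (hr0 _),
    cast_sub_two_mul_div_eq_prod_one_sub_two_mul hcl hl0 hd hr ht0 ht]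
  exact (hκ₁.const_mul 2).div (tendsto_const_nhds.add hβ) (by linarith)
end

section
/- Let κ ∈ (0, 1) and let l₀ be a positive integer with 1 − 1/l₀ > κ. Then there exists a sequence l : ℤ_{>0} → ℤ_{>0} of positive integers such that: (1) the partial products ∏_{n=1}^{N} (1 − 1/l(n)) converge to κ as N → ∞; (2) the sequence (l(n)) is nondecreasing; (3) l(n) ≥ l₀ for all n; (4) l(1) = l₀; (5) l(n) → ∞ as n → ∞; and (6) for every positive integer k there exist n₁, n₂ ∈ ℤ_{>0} such that k divides l(n₁) and k divides l(n₂) − 2. -/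
open Filter Finset

/-!
Choose the terms greedily: start from the seed `l 0 = l₀` with the empty product `1`, and let
`l (n + 1)` be the least `m ≥ l n` in a prescribed residue class for which the partial product
times `1 - 1 / m` still exceeds `κ`; then `l 1 = l₀`. The residue classes are scheduled at the
perfect squares, sparsely enough that over the first `n` steps they delay the sequence by at most
`n` in total, and they make every `k` divide some `l n₁` and some `l n₂ - 2`.

The partial products decrease and stay above `κ`. If they stayed above `κ + ε`, every large `m`
would be admissible, so `l n ≤ C + n`, and telescoping bounds the partial products by
`C / (C + n) → 0`, a contradiction. The same bound shows that `l` is unbounded.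
-/

theorem Nat.exists_modEq_mem_Ico {q : ℕ} (hq : 0 < q) (r L : ℕ) :
    ∃ m ∈ Set.Ico L (L + q), m ≡ r [MOD q] := by
  refine ⟨L + (r + q - L % q) % q,
    ⟨by omega, by have := Nat.mod_lt (r + q - L % q) hq; omega⟩, ?_⟩
  have hL : L % q + q * (L / q) = L := Nat.mod_add_div L q
  have hLq : L % q < q := Nat.mod_lt L hq
  calc L + (r + q - L % q) % q ≡ L + (r + q - L % q) [MOD q] :=
        Nat.ModEq.add_left _ (Nat.mod_modEq _ _)
    _ = r + q * (L / q + 1) := by rw [mul_add]; omega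
    _ ≡ r [MOD q] := Nat.add_mul_mod_self_left r q _

lemma lt_mul_one_sub_one_div {κ ε P m : ℝ} (hκ : 0 ≤ κ) (hε : 0 < ε) (hP : κ + ε ≤ P)
    (hm : (κ + ε) / ε < m) : κ < P * (1 - 1 / m) := by
  have hεm : κ + ε < ε * m := by rwa [div_lt_iff₀' hε] at hm
  have hm1 : 1 ≤ m := by nlinarith
  have hfac : 0 ≤ 1 - 1 / m := by
    rw [sub_nonneg, div_le_one (by linarith)]; exact hm1
  have hdiv : (κ + ε) / m < ε := by rw [div_lt_iff₀ (by linarith)]; linarith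
  calc κ < (κ + ε) * (1 - 1 / m) := by rw [mul_one_sub, mul_one_div]; linarith
    _ ≤ P * (1 - 1 / m) := mul_le_mul_of_nonneg_right hP hfac

/-- `C / (C + n)` is the telescoped value of `∏ i ∈ Icc 1 n, (1 - 1 / (C + i))`. -/
lemma prod_one_sub_one_div_le {a : ℕ → ℝ} {C : ℝ} (hC : 0 < C) (ha : ∀ i, 1 ≤ a i)
    (haC : ∀ i, a i ≤ C + i) (n : ℕ) : ∏ i ∈ Icc 1 n, (1 - 1 / a i) ≤ C / (C + n) := by
  induction n with
  | zero => simp [hC.ne']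
  | succ n ih =>
    have hpos : 0 < a (n + 1) := lt_of_lt_of_le one_pos (ha _)
    have hfac : 0 ≤ 1 - 1 / a (n + 1) := by
      rw [sub_nonneg, div_le_one hpos]; exact ha _
    rw [prod_Icc_succ_top (by omega)]
    calc (∏ i ∈ Icc 1 n, (1 - 1 / a i)) * (1 - 1 / a (n + 1))
        ≤ C / (C + n) * (1 - 1 / (C + (n + 1 : ℕ))) := by
          refine mul_le_mul ih ?_ hfac (by positivity)
          gcongr
          exact haC _
      _ = C / (C + (n + 1 : ℕ)) := by
          push_cast
          field_simp
          ring

def Admissible (κ P : ℝ) (q r prev m : ℕ) : Prop :=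
  prev ≤ m ∧ m ≡ r [MOD q] ∧ κ < P * (1 - 1 / (m : ℝ))

/-- The pairs `(l n, ∏ i ∈ Icc 1 n, (1 - 1 / l i))`; `sInf` of the empty set would be `0`, but the
set of admissible successors is nonempty as long as the product exceeds `κ`. -/
noncomputable def greedySeq (κ : ℝ) (q r : ℕ → ℕ) (l₀ : ℕ) : ℕ → ℕ × ℝ
  | 0 => (l₀, 1)
  | n + 1 =>
    let m := sInf {m | Admissible κ (greedySeq κ q r l₀ n).2 (q (n + 1)) (r (n + 1))
      (greedySeq κ q r l₀ n).1 m}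
    (m, (greedySeq κ q r l₀ n).2 * (1 - 1 / (m : ℝ)))

lemma exists_admissible_lt {κ ε P : ℝ} (hκ : 0 ≤ κ) (hε : 0 < ε) (hP : κ + ε ≤ P) {q : ℕ}
    (hq : 0 < q) (r prev : ℕ) :
    ∃ m, Admissible κ P q r prev m ∧ m < max prev (⌈(κ + ε) / ε⌉₊ + 1) + q := by
  set L := max prev (⌈(κ + ε) / ε⌉₊ + 1)
  have hL : (κ + ε) / ε < L := by
    have hceil := Nat.le_ceil ((κ + ε) / ε)
    have hmax : ((⌈(κ + ε) / ε⌉₊ + 1 : ℕ) : ℝ) ≤ L := Nat.cast_le.2 (le_max_right _ _)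
    push_cast at hmax
    linarith
  obtain ⟨m, ⟨hLm, hmq⟩, hmr⟩ := Nat.exists_modEq_mem_Ico hq r L
  refine ⟨m, ⟨(le_max_left _ _).trans hLm, hmr, lt_mul_one_sub_one_div hκ hε hP ?_⟩, hmq⟩
  exact hL.trans_le (by exact_mod_cast hLm)

lemma exists_admissible {κ P : ℝ} (hκ : 0 ≤ κ) (hP : κ < P) {q : ℕ} (hq : 0 < q) (r prev : ℕ) :
    ∃ m, Admissible κ P q r prev m :=
  (exists_admissible_lt hκ (sub_pos.2 hP) (add_sub_cancel κ P).le hq r prev).imp fun _ h => h.1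

section GreedySeq

variable {κ : ℝ} {q r : ℕ → ℕ} {l₀ : ℕ}

lemma greedySeq_snd_eq_prod (n : ℕ) :
    (greedySeq κ q r l₀ n).2 = ∏ i ∈ Icc 1 n, (1 - 1 / ((greedySeq κ q r l₀ i).1 : ℝ)) := by
  induction n with
  | zero => simp [greedySeq]
  | succ n ih => rw [prod_Icc_succ_top (by omega), ← ih]; rfl

lemma lt_greedySeq_snd (hκ : 0 < κ) (hq : ∀ n, 0 < q (n + 1)) (hl₀ : κ < 1 - 1 / (l₀ : ℝ))
    (n : ℕ) : κ < (greedySeq κ q r l₀ n).2 := by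
  induction n with
  | zero => exact hl₀.trans_le (by simp [greedySeq])
  | succ n ih => exact (Nat.sInf_mem (exists_admissible hκ.le ih (hq n) _ _)).2.2

lemma greedySeq_admissible (hκ : 0 < κ) (hq : ∀ n, 0 < q (n + 1))
    (hl₀ : κ < 1 - 1 / (l₀ : ℝ)) (n : ℕ) :
    Admissible κ (greedySeq κ q r l₀ n).2 (q (n + 1)) (r (n + 1)) (greedySeq κ q r l₀ n).1
      (greedySeq κ q r l₀ (n + 1)).1 :=
  Nat.sInf_mem (exists_admissible hκ.le (lt_greedySeq_snd hκ hq hl₀ n) (hq n) _ _)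

lemma greedySeq_fst_mono (hκ : 0 < κ) (hq : ∀ n, 0 < q (n + 1)) (hl₀ : κ < 1 - 1 / (l₀ : ℝ)) :
    Monotone fun n => (greedySeq κ q r l₀ n).1 :=
  monotone_nat_of_le_succ fun n => (greedySeq_admissible hκ hq hl₀ n).1

lemma le_greedySeq_fst (hκ : 0 < κ) (hq : ∀ n, 0 < q (n + 1)) (hl₀ : κ < 1 - 1 / (l₀ : ℝ))
    (n : ℕ) : l₀ ≤ (greedySeq κ q r l₀ n).1 :=
  greedySeq_fst_mono hκ hq hl₀ n.zero_le

lemma greedySeq_snd_anti (hκ : 0 < κ) (hq : ∀ n, 0 < q (n + 1)) (hl₀ : κ < 1 - 1 / (l₀ : ℝ)) :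
    Antitone fun n => (greedySeq κ q r l₀ n).2 :=
  antitone_nat_of_succ_le fun n =>
    mul_le_of_le_one_right (hκ.trans (lt_greedySeq_snd hκ hq hl₀ n)).le
      (sub_le_self _ (by positivity))

lemma greedySeq_fst_modEq (hκ : 0 < κ) (hq : ∀ n, 0 < q (n + 1))
    (hl₀ : κ < 1 - 1 / (l₀ : ℝ)) {n : ℕ} (hn : n ≠ 0) :
    (greedySeq κ q r l₀ n).1 ≡ r n [MOD q n] := by
  obtain ⟨n, rfl⟩ := Nat.exists_eq_succ_of_ne_zero hn
  exact (greedySeq_admissible hκ hq hl₀ n).2.1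

lemma greedySeq_one_fst (hl₀ : κ < 1 - 1 / (l₀ : ℝ)) (h₁ : l₀ ≡ r 1 [MOD q 1]) :
    (greedySeq κ q r l₀ 1).1 = l₀ := by
  have hadm : l₀ ∈ {m | Admissible κ 1 (q 1) (r 1) l₀ m} := ⟨le_rfl, h₁, by simpa using hl₀⟩
  show sInf {m | Admissible κ 1 (q 1) (r 1) l₀ m} = l₀
  exact le_antisymm (Nat.sInf_le hadm) (Nat.sInf_mem ⟨l₀, hadm⟩).1

/-- While the product stays `ε` above `κ`, every term above a fixed threshold is admissible, so
`l` only grows through the congruence constraints. -/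
lemma greedySeq_fst_le_of_le_snd (hκ : 0 < κ) (hq : ∀ n, 0 < q (n + 1))
    {ε : ℝ} (hε : 0 < ε) (hP : ∀ n, κ + ε ≤ (greedySeq κ q r l₀ n).2) (n : ℕ) :
    (greedySeq κ q r l₀ n).1 ≤
      max l₀ (⌈(κ + ε) / ε⌉₊ + 1) + ∑ i ∈ range n, (q (i + 1) - 1) := by
  induction n with
  | zero => simp [greedySeq]
  | succ n ih =>
    obtain ⟨m, hm, hmlt⟩ := exists_admissible_lt hκ.le hε (hP n) (hq n) (r (n + 1))
      (greedySeq κ q r l₀ n).1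
    have hle : (greedySeq κ q r l₀ (n + 1)).1 ≤ m := Nat.sInf_le hm
    have := hq n
    rw [sum_range_succ]
    omega

lemma exists_greedySeq_snd_lt (hl₀pos : 0 < l₀) (hκ : 0 < κ) (hq : ∀ n, 0 < q (n + 1))
    (hl₀ : κ < 1 - 1 / (l₀ : ℝ)) {C : ℕ} (hC : ∀ n, (greedySeq κ q r l₀ n).1 ≤ C + n)
    {b : ℝ} (hb : 0 < b) : ∃ N, (greedySeq κ q r l₀ N).2 < b := by
  have hC0 : (0 : ℝ) < C := by exact_mod_cast hl₀pos.trans_le (hC 0)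
  obtain ⟨N, hN⟩ := exists_nat_gt (C / b)
  refine ⟨N, ?_⟩
  rw [greedySeq_snd_eq_prod]
  calc _ ≤ (C : ℝ) / (C + N) :=
        prod_one_sub_one_div_le hC0
          (fun i => by exact_mod_cast hl₀pos.trans_le (le_greedySeq_fst hκ hq hl₀ i))
          (fun i => by exact_mod_cast hC i) N
    _ < b := by
        rw [div_lt_iff₀ hb] at hN
        rw [div_lt_iff₀ (by positivity)]
        nlinarith

lemma tendsto_greedySeq_fst (hl₀pos : 0 < l₀) (hκ : 0 < κ) (hq : ∀ n, 0 < q (n + 1))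
    (hl₀ : κ < 1 - 1 / (l₀ : ℝ)) : Tendsto (fun n => (greedySeq κ q r l₀ n).1) atTop atTop := by
  refine tendsto_atTop_atTop_of_monotone (greedySeq_fst_mono hκ hq hl₀) fun B => ?_
  by_contra! hB
  obtain ⟨N, hN⟩ := exists_greedySeq_snd_lt (r := r) hl₀pos hκ hq hl₀ (C := B)
    (fun n => by have := hB n; omega) hκ
  exact (lt_greedySeq_snd hκ hq hl₀ N).not_gt hN

lemma tendsto_greedySeq_snd (hl₀pos : 0 < l₀) (hκ : 0 < κ) (hq : ∀ n, 0 < q (n + 1))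
    (hl₀ : κ < 1 - 1 / (l₀ : ℝ)) (hbudget : ∀ n, ∑ i ∈ range n, (q (i + 1) - 1) ≤ n) :
    Tendsto (fun n => (greedySeq κ q r l₀ n).2) atTop (nhds κ) := by
  refine tendsto_order.2 ⟨fun a ha => Eventually.of_forall fun n =>
    ha.trans (lt_greedySeq_snd hκ hq hl₀ n), fun b hb => ?_⟩
  obtain ⟨N, hN⟩ : ∃ N, (greedySeq κ q r l₀ N).2 < b := by
    by_contra! hP
    have hε : 0 < b - κ := sub_pos.2 hb
    have hle := greedySeq_fst_le_of_le_snd (r := r) hκ hq hε (fun n => by simpa using hP n)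
    obtain ⟨N, hN⟩ := exists_greedySeq_snd_lt hl₀pos hκ hq hl₀
      (fun n => (hle n).trans (Nat.add_le_add_left (hbudget n) _)) (hκ.trans hb)
    exact (hP N).not_gt hN
  exact eventually_atTop.2 ⟨N, fun n hn => (greedySeq_snd_anti hκ hq hl₀ hn).trans_lt hN⟩

end GreedySeq

/-- Every modulus `k ≥ 1` is scheduled at `(2k - 1)²` with residue `0` and at `(2k)²` with
residue `2`; the moduli stay small enough for `sum_squareModulus_sub_one_le`. -/
def squareModulus (n : ℕ) : ℕ := if n.sqrt * n.sqrt = n then (n.sqrt + 1) / 2 else 1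

def squareResidue (n : ℕ) : ℕ := if Even n.sqrt then 2 else 0

lemma squareModulus_pos {n : ℕ} (hn : 0 < n) : 0 < squareModulus n := by
  unfold squareModulus
  split_ifs
  · have := Nat.sqrt_pos.2 hn; omega
  · exact one_pos

lemma squareModulus_odd_sq (j : ℕ) :
    squareModulus ((2 * j + 1) * (2 * j + 1)) = j + 1 ∧
      squareResidue ((2 * j + 1) * (2 * j + 1)) = 0 := by
  simp [squareModulus, squareResidue, Nat.sqrt_eq, parity_simps]
  omega

lemma squareModulus_even_sq (j : ℕ) :
    squareModulus ((2 * j + 2) * (2 * j + 2)) = j + 1 ∧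
      squareResidue ((2 * j + 2) * (2 * j + 2)) = 2 := by
  simp [squareModulus, squareResidue, Nat.sqrt_eq, parity_simps]
  omega

lemma sum_squareModulus_sub_one_le (n : ℕ) :
    ∑ i ∈ range n, (squareModulus (i + 1) - 1) ≤ n := by
  suffices h : ∑ i ∈ range n, (squareModulus (i + 1) - 1) ≤ n.sqrt * n.sqrt from
    h.trans (Nat.sqrt_le n)
  induction n with
  | zero => simp
  | succ n ih =>
    have hstep : squareModulus (n + 1) - 1 + n.sqrt * n.sqrt ≤ (n + 1).sqrt * (n + 1).sqrt := by
      unfold squareModulus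
      split_ifs with hsq
      · have hlt : n.sqrt < (n + 1).sqrt := Nat.sqrt_lt.2 (by omega)
        have hmul : n.sqrt * n.sqrt + 2 * n.sqrt + 1 ≤ (n + 1).sqrt * (n + 1).sqrt := by
          nlinarith
        have : (n + 1).sqrt ≤ n.sqrt + 1 := Nat.sqrt_succ_le_succ_sqrt n
        omega
      · have := Nat.mul_self_le_mul_self (Nat.sqrt_le_sqrt (Nat.le_add_right n 1))
        omega
    rw [sum_range_succ]
    omega

/-- for `κ ∈ (0,1)` and a positive integer `l₀` with `1 − 1/l₀ > κ`,
there is a sequence of positive integers `l(n)` (indexed by `n ≥ 1`) which is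
nondecreasing, bounded below by `l₀`, starts at `l(1) = l₀`, tends to infinity,
realizes `∏_{n=1}^∞ (1 − 1/l(n)) = κ`, and such that every positive integer `k`
divides some `l(n₁)` and some `l(n₂) − 2`. -/
theorem stmt_15 (κ : ℝ) (hκ : κ ∈ Set.Ioo (0 : ℝ) 1)
    (l₀ : ℕ) (hl₀ : 0 < l₀) (h : 1 - 1 / (l₀ : ℝ) > κ) :
    ∃ l : ℕ → ℕ, (∀ n, 1 ≤ n → 0 < l n) ∧
      Tendsto (fun N => ∏ k ∈ Finset.Icc 1 N, (1 - 1 / (l k : ℝ))) atTop (nhds κ) ∧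
      (∀ n m, 1 ≤ n → n ≤ m → l n ≤ l m) ∧
      (∀ n, 1 ≤ n → l₀ ≤ l n) ∧
      l 1 = l₀ ∧
      Tendsto (fun n => l n) atTop atTop ∧
      (∀ k : ℕ, 0 < k → ∃ n₁ n₂ : ℕ, 1 ≤ n₁ ∧ 1 ≤ n₂ ∧
        (k : ℤ) ∣ (l n₁ : ℤ) ∧ (k : ℤ) ∣ ((l n₂ : ℤ) - 2)) := by
  have hq : ∀ n, 0 < squareModulus (n + 1) := fun n => squareModulus_pos n.succ_pos
  refine ⟨fun n => (greedySeq κ squareModulus squareResidue l₀ n).1,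
    fun n _ => hl₀.trans_le (le_greedySeq_fst hκ.1 hq h n), ?_,
    fun n m _ hnm => greedySeq_fst_mono hκ.1 hq h hnm,
    fun n _ => le_greedySeq_fst hκ.1 hq h n,
    greedySeq_one_fst h (by simp [squareModulus, Nat.modEq_one]),
    tendsto_greedySeq_fst hl₀ hκ.1 hq h, fun k hk => ?_⟩
  · simpa only [greedySeq_snd_eq_prod] using
      tendsto_greedySeq_snd hl₀ hκ.1 hq h sum_squareModulus_sub_one_le
  · obtain ⟨j, rfl⟩ := Nat.exists_eq_succ_of_ne_zero hk.ne'
    obtain ⟨hq₁, hr₁⟩ := squareModulus_odd_sq j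
    obtain ⟨hq₂, hr₂⟩ := squareModulus_even_sq j
    have h₁ := greedySeq_fst_modEq (r := squareResidue) hκ.1 hq h
      (n := (2 * j + 1) * (2 * j + 1)) (by positivity)
    have h₂ := greedySeq_fst_modEq (r := squareResidue) hκ.1 hq h
      (n := (2 * j + 2) * (2 * j + 2)) (by positivity)
    rw [hq₁, hr₁] at h₁
    rw [hq₂, hr₂] at h₂
    exact ⟨_, _, Nat.one_le_iff_ne_zero.2 (by positivity), Nat.one_le_iff_ne_zero.2 (by positivity),
      Int.natCast_dvd_natCast.2 (Nat.modEq_zero_iff_dvd.1 h₁), Nat.modEq_iff_dvd.1 h₂.symm⟩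
end

section
/- Let l : ℤ_{>0} → ℤ_{>0} be a sequence of positive integers such that the limit κ₀ = lim_{N→∞} ∏_{n=1}^{N} (1 − 1/l(n)) is strictly positive. Then for every real number κ with 0 ≤ κ ≤ κ₀ there exists a sequence d : ℤ_{>0} → ℤ_{>0} such that 1 ≤ d(n) ≤ l(n) − 1 for all n and the partial products ∏_{n=1}^{N} d(n)/l(n) converge to κ as N → ∞. -/
/-!
Pick the digits greedily. The target `A n = (κ / κ₀) ∏_{k ≤ n} (1 - 1/l(k))` starts at
`κ / κ₀ ≤ 1` and tends to `κ`. Given the partial product `P n ≥ A n`, the next target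
`A (n+1) = A n (1 - 1/l(n+1))` is at most `P n (l(n+1) - 1)/l(n+1)`, so rounding
`A (n+1) l(n+1) / P n` up gives a digit `d ∈ [1, l(n+1) - 1]` with
`A (n+1) ≤ P (n+1) ≤ A (n+1) + 1/l(n+1)`. Since the infinite product converges to a nonzero
limit, its factors tend to `1`, i.e. `1/l(n) → 0`, and the partial products are squeezed to `κ`.
-/

open Filter Topology Finset

lemma ne_zero_of_tendsto_prod_Icc {M : Type*} [CommMonoidWithZero M] [TopologicalSpace M]
    [T2Space M] {f : ℕ → M} {a : M}
    (h : Tendsto (fun N => ∏ k ∈ Icc 1 N, f k) atTop (𝓝 a)) (ha : a ≠ 0) {k : ℕ} (hk : 1 ≤ k) :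
    f k ≠ 0 := by
  intro hfk
  have hzero : Tendsto (fun N => ∏ k ∈ Icc 1 N, f k) atTop (𝓝 0) := by
    refine tendsto_const_nhds.congr' ?_
    filter_upwards [eventually_ge_atTop k] with N hN
    exact (prod_eq_zero (mem_Icc.mpr ⟨hk, hN⟩) hfk).symm
  exact ha (tendsto_nhds_unique h hzero)

lemma tendsto_one_of_tendsto_prod_Icc {K : Type*} [NormedField K] {f : ℕ → K} {a : K}
    (h : Tendsto (fun N => ∏ k ∈ Icc 1 N, f k) atTop (𝓝 a)) (ha : a ≠ 0) :
    Tendsto f atTop (𝓝 1) := by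
  refine (tendsto_add_atTop_iff_nat 1).mp ?_
  have hratio := (h.comp (tendsto_add_atTop_nat 1)).div h ha
  rw [div_self ha] at hratio
  refine hratio.congr' ?_
  filter_upwards [h.eventually_ne ha] with N hN
  show (∏ k ∈ Icc 1 (N + 1), f k) / ∏ k ∈ Icc 1 N, f k = f (N + 1)
  rw [prod_Icc_succ_top (Nat.le_add_left 1 N), mul_div_cancel_left₀ _ hN]

lemma le_max_one_ceil (x : ℝ) : x ≤ (max 1 ⌈x⌉₊ : ℕ) :=
  (Nat.le_ceil x).trans (by exact_mod_cast le_max_right 1 ⌈x⌉₊)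

lemma max_one_ceil_le_add_one {x : ℝ} (hx : 0 ≤ x) : ((max 1 ⌈x⌉₊ : ℕ) : ℝ) ≤ x + 1 := by
  push_cast
  exact max_le (by linarith) (Nat.ceil_lt_add_one hx).le

lemma max_one_ceil_le {x : ℝ} {m : ℕ} (hm : 1 ≤ m) (hx : x ≤ m) : max 1 ⌈x⌉₊ ≤ m :=
  max_le hm (Nat.ceil_le.mpr hx)

lemma one_sub_one_div_natCast_nonneg (L : ℕ) : 0 ≤ 1 - 1 / (L : ℝ) := by
  rcases Nat.eq_zero_or_pos L with rfl | hL
  · simp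
  · exact sub_nonneg.mpr ((div_le_one (by positivity)).mpr (by exact_mod_cast hL))

/-- The least digit `d ≥ 1` with `t ≤ P * (d / L)`. -/
noncomputable def greedyDigit (L : ℕ) (P t : ℝ) : ℕ := max 1 ⌈t * L / P⌉₊

section GreedyDigit

variable {L : ℕ} {P t : ℝ}

lemma one_le_greedyDigit : 1 ≤ greedyDigit L P t := le_max_left _ _

lemma greedyDigit_le (hL : 2 ≤ L) (hP : 0 < P) (ht : t ≤ P * (1 - 1 / L)) :
    greedyDigit L P t ≤ L - 1 := by
  have hL0 : (0 : ℝ) < L := by positivity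
  refine max_one_ceil_le (by omega) ?_
  rw [Nat.cast_sub (by omega : 1 ≤ L), Nat.cast_one, div_le_iff₀ hP]
  calc t * L ≤ P * (1 - 1 / L) * L := by gcongr
    _ = ((L : ℝ) - 1) * P := by field_simp

lemma le_mul_greedyDigit (hL : 0 < L) (hP : 0 < P) : t ≤ P * (greedyDigit L P t / L) := by
  have hL0 : (0 : ℝ) < L := by exact_mod_cast hL
  have h := le_max_one_ceil (t * L / P)
  rw [div_le_iff₀ hP] at h
  rw [mul_div_assoc', le_div_iff₀ hL0]
  simpa only [greedyDigit, mul_comm] using h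

lemma mul_greedyDigit_le (hL : 0 < L) (hP : 0 < P) (ht : 0 ≤ t) :
    P * (greedyDigit L P t / L) ≤ t + P / L := by
  have hL0 : (0 : ℝ) < L := by exact_mod_cast hL
  have h := max_one_ceil_le_add_one (x := t * L / P) (by positivity)
  calc P * (greedyDigit L P t / L) ≤ P * ((t * L / P + 1) / L) := by
        unfold greedyDigit; gcongr
    _ = t + P / L := by field_simp

end GreedyDigit

section Greedy

variable (l : ℕ → ℕ) (A : ℕ → ℝ)

/-- Partial products `P n` of the greedy digits approximating the targets `A n` from above. -/
noncomputable def greedyProd : ℕ → ℝ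
  | 0 => 1
  | n + 1 => greedyProd n * (greedyDigit (l (n + 1)) (greedyProd n) (A (n + 1)) / l (n + 1))

noncomputable def greedyDigits (n : ℕ) : ℕ := greedyDigit (l n) (greedyProd l A (n - 1)) (A n)

lemma greedyProd_succ (n : ℕ) :
    greedyProd l A (n + 1) = greedyProd l A n * (greedyDigits l A (n + 1) / l (n + 1)) := rfl

lemma prod_greedyDigits (N : ℕ) :
    ∏ k ∈ Icc 1 N, ((greedyDigits l A k : ℝ) / l k) = greedyProd l A N := by
  induction N with
  | zero => rfl
  | succ N ih => rw [prod_Icc_succ_top (Nat.le_add_left 1 N), ih, greedyProd_succ]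

structure GreedyTarget (l : ℕ → ℕ) (A : ℕ → ℝ) : Prop where
  two_le : ∀ n, 2 ≤ l (n + 1)
  nonneg : ∀ n, 0 ≤ A n
  le_one : A 0 ≤ 1
  succ_eq : ∀ n, A (n + 1) = A n * (1 - 1 / l (n + 1))

variable {l A}

lemma GreedyTarget.le_greedyProd_mul (h : GreedyTarget l A) {n : ℕ} (hAP : A n ≤ greedyProd l A n) :
    A (n + 1) ≤ greedyProd l A n * (1 - 1 / l (n + 1)) := by
  rw [h.succ_eq]
  exact mul_le_mul_of_nonneg_right hAP (one_sub_one_div_natCast_nonneg _)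

lemma GreedyTarget.greedyProd_bounds (h : GreedyTarget l A) (n : ℕ) :
    0 < greedyProd l A n ∧ greedyProd l A n ≤ 1 ∧ A n ≤ greedyProd l A n := by
  induction n with
  | zero => exact ⟨one_pos, le_rfl, h.le_one⟩
  | succ n ih =>
    obtain ⟨hP0, hP1, hAP⟩ := ih
    have hL : (2 : ℝ) ≤ l (n + 1) := by exact_mod_cast h.two_le n
    have hd : (greedyDigits l A (n + 1) : ℝ) ≤ l (n + 1) - 1 := by
      have := Nat.cast_le (α := ℝ) |>.mpr
        (greedyDigit_le (h.two_le n) hP0 (h.le_greedyProd_mul hAP))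
      rwa [Nat.cast_sub (one_le_two.trans (h.two_le n)), Nat.cast_one] at this
    have hd1 : (1 : ℝ) ≤ greedyDigits l A (n + 1) := by exact_mod_cast one_le_greedyDigit
    rw [greedyProd_succ]
    refine ⟨by positivity, ?_, le_mul_greedyDigit (by linarith [h.two_le n]) hP0⟩
    calc greedyProd l A n * (greedyDigits l A (n + 1) / l (n + 1)) ≤ 1 * 1 := by
          gcongr; rw [div_le_one (by linarith)]; linarith
      _ = 1 := one_mul 1

lemma GreedyTarget.greedyDigits_mem (h : GreedyTarget l A) (n : ℕ) (hn : 1 ≤ n) :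
    1 ≤ greedyDigits l A n ∧ greedyDigits l A n ≤ l n - 1 := by
  obtain ⟨m, rfl⟩ := Nat.exists_eq_add_of_le' hn
  obtain ⟨hP0, -, hAP⟩ := h.greedyProd_bounds m
  exact ⟨one_le_greedyDigit, greedyDigit_le (h.two_le m) hP0 (h.le_greedyProd_mul hAP)⟩

theorem GreedyTarget.tendsto_greedyProd (h : GreedyTarget l A) {κ : ℝ}
    (hl0 : Tendsto (fun n => 1 / (l n : ℝ)) atTop (𝓝 0)) (hAκ : Tendsto A atTop (𝓝 κ)) :
    Tendsto (greedyProd l A) atTop (𝓝 κ) := by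
  refine tendsto_of_tendsto_of_tendsto_of_le_of_le' hAκ (add_zero κ ▸ hAκ.add hl0)
    (Eventually.of_forall fun n => (h.greedyProd_bounds n).2.2) ?_
  filter_upwards [eventually_ge_atTop 1] with n hn
  obtain ⟨m, rfl⟩ := Nat.exists_eq_add_of_le' hn
  obtain ⟨hP0, hP1, -⟩ := h.greedyProd_bounds m
  calc greedyProd l A (m + 1) ≤ A (m + 1) + greedyProd l A m / l (m + 1) :=
        mul_greedyDigit_le (by linarith [h.two_le m]) hP0 (h.nonneg _)
    _ ≤ A (m + 1) + 1 / l (m + 1) := by gcongr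

end Greedy

/-- if `l(n)` are positive integers with
`κ₀ = lim_N ∏_{n=1}^N (1 − 1/l(n)) > 0`, then for every `κ ∈ [0, κ₀]` there is a
sequence `d(n)` of positive integers with `1 ≤ d(n) ≤ l(n) − 1` for all `n` and
`∏_{n=1}^∞ d(n)/l(n) = κ`. -/
theorem stmt_17 (l : ℕ → ℕ) (hl : ∀ n, 1 ≤ n → 0 < l n) (κ₀ : ℝ)
    (hκ₀ : Tendsto (fun N => ∏ k ∈ Finset.Icc 1 N, (1 - 1 / (l k : ℝ))) atTop (nhds κ₀))
    (hpos : 0 < κ₀)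
    (κ : ℝ) (hκ0 : 0 ≤ κ) (hκκ₀ : κ ≤ κ₀) :
    ∃ d : ℕ → ℕ, (∀ n, 1 ≤ n → 1 ≤ d n ∧ d n ≤ l n - 1) ∧
      Tendsto (fun N => ∏ k ∈ Finset.Icc 1 N, ((d k : ℝ) / (l k : ℝ))) atTop (nhds κ) := by
  set A : ℕ → ℝ := fun n => κ / κ₀ * ∏ k ∈ Icc 1 n, (1 - 1 / (l k : ℝ))
  have hl2 (n : ℕ) : 2 ≤ l (n + 1) := by
    have hne : l (n + 1) ≠ 1 := by
      intro h1
      simpa [h1] using ne_zero_of_tendsto_prod_Icc hκ₀ hpos.ne' (Nat.le_add_left 1 n)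
    have := hl (n + 1) (Nat.le_add_left 1 n)
    omega
  have hA : GreedyTarget l A :=
    { two_le := hl2
      nonneg n := mul_nonneg (div_nonneg hκ0 hpos.le)
        (prod_nonneg fun k _ => one_sub_one_div_natCast_nonneg (l k))
      le_one := by simpa [A, div_le_one hpos] using hκκ₀
      succ_eq n := by simp only [A, prod_Icc_succ_top (Nat.le_add_left 1 n), mul_assoc] }
  have hl0 : Tendsto (fun n => 1 / (l n : ℝ)) atTop (𝓝 0) := by
    simpa using (tendsto_one_of_tendsto_prod_Icc hκ₀ hpos.ne').const_sub 1
  refine ⟨greedyDigits l A, hA.greedyDigits_mem, ?_⟩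
  simp_rw [prod_greedyDigits]
  simpa [A, div_mul_cancel₀ κ hpos.ne'] using hA.tendsto_greedyProd hl0 (hκ₀.const_mul (κ / κ₀))
end
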